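/- arXiv:2101.11385 — 8 statements merged into one kernel-verified Lean document; each statement's English description precedes it below -/
import Mathlib

section
/- Assume: (i) each F_i is integrable on B; (ii) each G_j is continuous on B, differentiable at every point of the interior of B, and the divergence x ↦ ∑_{j=1}^{d} ∂_{x_j} G_j(x) is integrable on B; (iii) for every x in the interior of B, ∑_{i=0}^{L} c_i·F_i(x) = ∑_{j=1}^{d} ∂_{x_j} G_j(x); (iv) for each j, G_j(x) = 0 for every x ∈ B whose j-th coordinate x_j equals u_j or o_j. Then ∑_{i=0}^{L} c_i·∫_B F_i(x) dx = 0. -/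
/-!
The combination `∑ cᵢ Fᵢ` equals the divergence of `G` on the interior of the box, whose
complement in the box is null since a convex set has null frontier. By the divergence theorem the
integral of the divergence is a sum of integrals of `G j` over the two faces orthogonal to the
`j`-th axis, and these vanish because `G j` vanishes there.
-/

open MeasureTheory Set

theorem interior_Icc_pi_ae_eq_Icc {ι : Type*} [Fintype ι] (a b : ι → ℝ) :
    interior (Icc a b) =ᵐ[volume] Icc a b :=
  interior_ae_eq_of_null_frontier ((convex_Icc a b).addHaar_frontier volume)

theorem interior_Icc_pi {ι : Type*} [Finite ι] (a b : ι → ℝ) :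
    interior (Icc a b) = pi univ fun i => Ioo (a i) (b i) := by
  simp only [← pi_univ_Icc, interior_pi_set finite_univ, interior_Icc]

section Faces

variable {E : Type*} [NormedAddCommGroup E] [NormedSpace ℝ E] {n : ℕ}

theorem setIntegral_face_eq_zero {a b : Fin (n + 1) → ℝ} {f : (Fin (n + 1) → ℝ) → E}
    {j : Fin (n + 1)} {v : ℝ} (hv : v ∈ Icc (a j) (b j))
    (hf : ∀ x ∈ Icc a b, x j = v → f x = 0) :
    ∫ x in Icc (a ∘ j.succAbove) (b ∘ j.succAbove), f (j.insertNth v x) = 0 := by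
  refine setIntegral_eq_zero_of_forall_eq_zero fun x hx => hf _ ?_ (by simp)
  exact Fin.insertNth_mem_Icc.2 ⟨hv, hx⟩

theorem integral_divergence_eq_zero_of_eq_zero_on_faces {a b : Fin (n + 1) → ℝ} (hle : a ≤ b)
    (G : Fin (n + 1) → (Fin (n + 1) → ℝ) → E)
    (hcont : ∀ j, ContinuousOn (G j) (Icc a b))
    (hdiff : ∀ j, ∀ x ∈ interior (Icc a b), DifferentiableAt ℝ (G j) x)
    (hint : IntegrableOn (fun x => ∑ j, fderiv ℝ (G j) x (Pi.single j 1)) (Icc a b))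
    (hfaces : ∀ j, ∀ x ∈ Icc a b, (x j = a j ∨ x j = b j) → G j x = 0) :
    ∫ x in Icc a b, ∑ j, fderiv ℝ (G j) x (Pi.single j 1) = 0 := by
  rw [integral_divergence_of_hasFDerivAt_off_countable' a b hle G
    (fun j x => fderiv ℝ (G j) x) ∅ countable_empty hcont
    (fun x hx j => (hdiff j x (interior_Icc_pi a b ▸ hx.1)).hasFDerivAt) hint]
  refine Finset.sum_eq_zero fun j _ => ?_
  rw [setIntegral_face_eq_zero ⟨hle j, le_rfl⟩ fun x hx hxj => hfaces j x hx (.inr hxj),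
    setIntegral_face_eq_zero ⟨le_rfl, hle j⟩ fun x hx hxj => hfaces j x hx (.inl hxj), sub_zero]

end Faces

/-- If the integrand satisfies the Almkvist–Zeilberger integrand recurrence on the box and
the certificates vanish on the boundary faces, then the integral satisfies the homogeneous
linear recurrence `∑ e_i(n) I(n+i) = 0`. -/
theorem box_integral_homogeneous_recurrence
    (d L : ℕ) (hd : 1 ≤ d)
    (u o : Fin d → ℝ) (huo : ∀ j, u j < o j)
    (c : Fin (L + 1) → ℝ)
    (F : Fin (L + 1) → (Fin d → ℝ) → ℝ)
    (G : Fin d → (Fin d → ℝ) → ℝ)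
    (hFint : ∀ i, IntegrableOn (F i) (Set.Icc u o) volume)
    (hGcont : ∀ j, ContinuousOn (G j) (Set.Icc u o))
    (hGdiff : ∀ j, ∀ x ∈ interior (Set.Icc u o), DifferentiableAt ℝ (G j) x)
    (hdiv : IntegrableOn
      (fun x => ∑ j : Fin d, fderiv ℝ (G j) x (Pi.single j (1 : ℝ))) (Set.Icc u o) volume)
    (heq : ∀ x ∈ interior (Set.Icc u o),
      ∑ i : Fin (L + 1), c i * F i x = ∑ j : Fin d, fderiv ℝ (G j) x (Pi.single j (1 : ℝ)))
    (hbd : ∀ j, ∀ x ∈ Set.Icc u o, (x j = u j ∨ x j = o j) → G j x = 0) :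
    ∑ i : Fin (L + 1), c i * ∫ x in Set.Icc u o, F i x = 0 := by
  obtain ⟨n, rfl⟩ : ∃ n, d = n + 1 := ⟨d - 1, by omega⟩
  have hae := interior_Icc_pi_ae_eq_Icc u o
  calc ∑ i, c i * ∫ x in Icc u o, F i x
      = ∫ x in Icc u o, ∑ i, c i * F i x := by
        rw [integral_finsetSum _ fun i _ => (hFint i).const_mul (c i)]
        simp_rw [integral_const_mul]
    _ = ∫ x in interior (Icc u o), ∑ j, fderiv ℝ (G j) x (Pi.single j 1) := by
        rw [← setIntegral_congr_set hae]
        exact setIntegral_congr_fun isOpen_interior.measurableSet heq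
    _ = 0 := by
        rw [setIntegral_congr_set hae]
        exact integral_divergence_eq_zero_of_eq_zero_on_faces (fun j => (huo j).le) G hGcont
          hGdiff hdiv hbd
end

section
/- Assume: (i) for each x ∈ I and 0 ≤ i ≤ L the partial derivative ∂_x^i F(x,y) exists for all y ∈ B and y ↦ ∂_x^i F(x,y) is integrable on B; (ii) the function 𝓘(x) = ∫_B F(x,y) dy is L times differentiable on I and differentiation under the integral sign is valid, i.e., 𝓘^{(i)}(x) = ∫_B ∂_x^i F(x,y) dy for all x ∈ I and 0 ≤ i ≤ L; (iii) for each x ∈ I, every G_j(x,·) is continuous on B, differentiable at every point of the interior of B, and y ↦ ∑_{j=1}^{d} ∂_{y_j} G_j(x,y) is integrable on B; (iv) for every x ∈ I and every y in the interior of B, ∑_{i=0}^{L} e_i(x)·∂_x^i F(x,y) = ∑_{j=1}^{d} ∂_{y_j} G_j(x,y); (v) for each j and x ∈ I, G_j(x,y) = 0 for every y ∈ B whose j-th coordinate y_j equals u_j or o_j. Then for every x ∈ I, ∑_{i=0}^{L} e_i(x)·𝓘^{(i)}(x) = 0. -/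
/-!
Integrate the integrand equation over the box. Differentiating under the integral sign turns the
left side into `∑ eᵢ(x) 𝓘⁽ⁱ⁾(x)`; the two sides agree off the boundary, which is null because the
box is convex. By the divergence theorem the right side is a sum of integrals of `G_j` over the
faces `y_j = u_j` and `y_j = o_j`, where `G_j` vanishes.
-/

open MeasureTheory Set

theorem setIntegral_congr_of_eqOn_interior {E : Type*} [NormedAddCommGroup E]
    [NormedSpace ℝ E] [FiniteDimensional ℝ E] [MeasurableSpace E] [BorelSpace E]
    {F : Type*} [NormedAddCommGroup F] [NormedSpace ℝ F]
    (μ : Measure E) [μ.IsAddHaarMeasure] {s : Set E} (hs : Convex ℝ s) {f g : E → F}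
    (hfg : EqOn f g (interior s)) :
    ∫ x in s, f x ∂μ = ∫ x in s, g x ∂μ := by
  have hae : interior s =ᵐ[μ] s := interior_ae_eq_of_null_frontier (hs.addHaar_frontier μ)
  rw [← setIntegral_congr_set hae, ← setIntegral_congr_set hae]
  exact setIntegral_congr_fun isOpen_interior.measurableSet hfg

theorem setIntegral_Icc_divergence_eq_zero {E : Type*} [NormedAddCommGroup E] [NormedSpace ℝ E]
    {d : ℕ} {a b : Fin d → ℝ} (hle : a ≤ b) (f : Fin d → (Fin d → ℝ) → E)
    (hc : ∀ i, ContinuousOn (f i) (Icc a b))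
    (hd : ∀ i, ∀ x ∈ interior (Icc a b), DifferentiableAt ℝ (f i) x)
    (hi : IntegrableOn (fun x => ∑ i, fderiv ℝ (f i) x (Pi.single i 1)) (Icc a b))
    (hface : ∀ i, ∀ x ∈ Icc a b, (x i = a i ∨ x i = b i) → f i x = 0) :
    ∫ x in Icc a b, ∑ i, fderiv ℝ (f i) x (Pi.single i 1) = 0 := by
  cases d with
  | zero => simp
  | succ n =>
    have hpi : (pi univ fun i => Ioo (a i) (b i)) ⊆ interior (Icc a b) :=
      interior_maximal (fun x hx => ⟨fun i => (hx i trivial).1.le, fun i => (hx i trivial).2.le⟩)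
        (isOpen_set_pi finite_univ fun _ _ => isOpen_Ioo)
    have hface_integral : ∀ i, ∀ c ∈ Icc (a i) (b i), (c = a i ∨ c = b i) →
        ∫ z in Icc (a ∘ i.succAbove) (b ∘ i.succAbove), f i (i.insertNth c z) = 0 :=
      fun i c hc hab => setIntegral_eq_zero_of_forall_eq_zero fun z hz =>
        hface i _ (Fin.insertNth_mem_Icc.2 ⟨hc, hz⟩) (by simpa using hab)
    rw [integral_divergence_of_hasFDerivAt_off_countable' a b hle f
      (fun i x => fderiv ℝ (f i) x) ∅ countable_empty hc
      (fun x hx i => (hd i x (hpi hx.1)).hasFDerivAt) hi]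
    refine Finset.sum_eq_zero fun i _ => ?_
    rw [hface_integral i (b i) (right_mem_Icc.2 (hle i)) (Or.inr rfl),
      hface_integral i (a i) (left_mem_Icc.2 (hle i)) (Or.inl rfl), sub_zero]

theorem parametric_box_integral_homogeneous_ODE_general
    (d L : ℕ)
    (I : Set ℝ)
    (u o : Fin d → ℝ) (huo : ∀ j, u j < o j)
    (e : Fin (L + 1) → ℝ → ℝ)
    (F : ℝ → (Fin d → ℝ) → ℝ)
    (G : Fin d → ℝ → (Fin d → ℝ) → ℝ)
    (𝓘 : ℝ → ℝ)
    (hFint : ∀ x ∈ I, ∀ i ≤ L,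
      IntegrableOn (fun y => iteratedDeriv i (fun τ : ℝ => F τ y) x) (Set.Icc u o) volume)
    (h𝓘deriv : ∀ x ∈ I, ∀ i ≤ L,
      iteratedDeriv i 𝓘 x = ∫ y in Set.Icc u o, iteratedDeriv i (fun τ : ℝ => F τ y) x)
    (hGcont : ∀ j, ∀ x ∈ I, ContinuousOn (G j x) (Set.Icc u o))
    (hGdiff : ∀ j, ∀ x ∈ I, ∀ y ∈ interior (Set.Icc u o), DifferentiableAt ℝ (G j x) y)
    (hdiv : ∀ x ∈ I, IntegrableOn
      (fun y => ∑ j : Fin d, fderiv ℝ (G j x) y (Pi.single j (1 : ℝ))) (Set.Icc u o) volume)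
    (heq : ∀ x ∈ I, ∀ y ∈ interior (Set.Icc u o),
      ∑ i : Fin (L + 1), e i x * iteratedDeriv (i : ℕ) (fun τ : ℝ => F τ y) x
        = ∑ j : Fin d, fderiv ℝ (G j x) y (Pi.single j (1 : ℝ)))
    (hbd : ∀ j, ∀ x ∈ I, ∀ y ∈ Set.Icc u o, (y j = u j ∨ y j = o j) → G j x y = 0) :
    ∀ x ∈ I, ∑ i : Fin (L + 1), e i x * iteratedDeriv (i : ℕ) 𝓘 x = 0 := by
  intro x hx
  calc ∑ i : Fin (L + 1), e i x * iteratedDeriv i 𝓘 x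
      = ∫ y in Icc u o, ∑ i : Fin (L + 1), e i x * iteratedDeriv i (fun τ => F τ y) x := by
        rw [integral_finsetSum _ fun (i : Fin (L + 1)) _ => (hFint x hx i i.is_le).const_mul _]
        exact Finset.sum_congr rfl fun i _ => by rw [h𝓘deriv x hx i i.is_le, integral_const_mul]
    _ = ∫ y in Icc u o, ∑ j, fderiv ℝ (G j x) y (Pi.single j 1) :=
        setIntegral_congr_of_eqOn_interior volume (convex_Icc u o) (heq x hx)
    _ = 0 := setIntegral_Icc_divergence_eq_zero (fun j => (huo j).le) (fun j => G j x)
        (fun j => hGcont j x hx) (fun j => hGdiff j x hx) (hdiv x hx) (fun j => hbd j x hx)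

/-- If the integrand satisfies the continuous Almkvist–Zeilberger integrand differential
equation and the certificates vanish on the boundary faces, then the parametric integral
satisfies the homogeneous linear ODE `∑ e_i(x) D_x^i 𝓘(x) = 0`. -/
theorem parametric_box_integral_homogeneous_ODE
    (d L : ℕ) (hd : 1 ≤ d)
    (I : Set ℝ) (hIopen : IsOpen I) (hIconn : I.OrdConnected)
    (u o : Fin d → ℝ) (huo : ∀ j, u j < o j)
    (e : Fin (L + 1) → ℝ → ℝ)
    (F : ℝ → (Fin d → ℝ) → ℝ)
    (G : Fin d → ℝ → (Fin d → ℝ) → ℝ)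
    (𝓘 : ℝ → ℝ) (h𝓘 : ∀ x, 𝓘 x = ∫ y in Set.Icc u o, F x y)
    (hFsmooth : ∀ x ∈ I, ∀ y ∈ Set.Icc u o, ContDiffAt ℝ L (fun τ : ℝ => F τ y) x)
    (hFint : ∀ x ∈ I, ∀ i ≤ L,
      IntegrableOn (fun y => iteratedDeriv i (fun τ : ℝ => F τ y) x) (Set.Icc u o) volume)
    (h𝓘smooth : ∀ x ∈ I, ContDiffAt ℝ L 𝓘 x)
    (h𝓘deriv : ∀ x ∈ I, ∀ i ≤ L,
      iteratedDeriv i 𝓘 x = ∫ y in Set.Icc u o, iteratedDeriv i (fun τ : ℝ => F τ y) x)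
    (hGcont : ∀ j, ∀ x ∈ I, ContinuousOn (G j x) (Set.Icc u o))
    (hGdiff : ∀ j, ∀ x ∈ I, ∀ y ∈ interior (Set.Icc u o), DifferentiableAt ℝ (G j x) y)
    (hdiv : ∀ x ∈ I, IntegrableOn
      (fun y => ∑ j : Fin d, fderiv ℝ (G j x) y (Pi.single j (1 : ℝ))) (Set.Icc u o) volume)
    (heq : ∀ x ∈ I, ∀ y ∈ interior (Set.Icc u o),
      ∑ i : Fin (L + 1), e i x * iteratedDeriv (i : ℕ) (fun τ : ℝ => F τ y) x
        = ∑ j : Fin d, fderiv ℝ (G j x) y (Pi.single j (1 : ℝ)))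
    (hbd : ∀ j, ∀ x ∈ I, ∀ y ∈ Set.Icc u o, (y j = u j ∨ y j = o j) → G j x y = 0) :
    ∀ x ∈ I, ∑ i : Fin (L + 1), e i x * iteratedDeriv (i : ℕ) 𝓘 x = 0 :=
  parametric_box_integral_homogeneous_ODE_general d L I u o huo e F G 𝓘 hFint h𝓘deriv hGcont hGdiff
    hdiv heq hbd
end

section
/- Suppose that for every x ∈ I, every ε with 0 < |ε| < ρ, and every 0 ≤ i ≤ d: the i-th derivative ∂_x^i J(ε,x) exists, the series ∑_{k=0}^{∞} F_{κ+k}^{(i)}(x)·ε^{κ+k} converges to ∂_x^i J(ε,x), and the series ∑_{k=0}^{∞} h_{κ+k}(x)·ε^{κ+k} converges to ∑_{i=0}^{d} a_i(ε,x)·∂_x^i J(ε,x). Then for every integer m ≥ κ and every x ∈ I: ∑_{i=0}^{d} ∑_{l=0}^{min(M, m−κ)} A_{i,l}(x)·F_{m−l}^{(i)}(x) = h_m(x). In particular, taking m = κ, the lowest-order coefficient satisfies the linear ODE ∑_{i=0}^{d} A_{i,0}(x)·F_{κ}^{(i)}(x) = h_{κ}(x), i.e., ∑_{i=0}^{d}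 a_i(0,x)·D_x^i F_{κ}(x) = h_{κ}(x). -/
open MeasureTheory

/-- Uniqueness of power-series coefficients: if `∑ e k * ε ^ k = 0` for all `ε` in a
punctured interval around `0`, then all coefficients vanish. -/
lemma coeff_unique_zero (e : ℕ → ℝ) (ρ : ℝ) (hρ : 0 < ρ)
    (H : ∀ ε : ℝ, 0 < |ε| → |ε| < ρ → HasSum (fun k => e k * ε ^ k) 0) :
    ∀ n, e n = 0 := by
  intro n
  induction n using Nat.strong_induction_on with
  | _ n ih =>
  set r := ρ / 2 with hrdef
  have hr : 0 < r := by positivity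
  have hrρ : r < ρ := by rw [hrdef]; linarith
  have hsum : Summable fun k => e k * r ^ k :=
    (H r (by rw [abs_of_pos hr]; exact hr) (by rw [abs_of_pos hr]; exact hrρ)).summable
  have hsabs : Summable fun k => |e k * r ^ k| := hsum.abs
  set C := ∑' k, |e k * r ^ k| with hCdef
  have hC : ∀ k, |e k * r ^ k| ≤ C := fun k =>
    Summable.le_tsum hsabs k (fun j _ => abs_nonneg _)
  have hC0 : 0 ≤ C := (abs_nonneg _).trans (hC 0)
  have hrn : 0 < r ^ n := pow_pos hr n
  have key : ∀ t : ℝ, 0 < t → t < 1/2 → |e n| * r ^ n ≤ 2 * C * t := by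
    intro t ht ht2
    set ε := t * r with hεdef
    have hε : 0 < ε := mul_pos ht hr
    have hεr : ε < r := by nlinarith
    have hs := H ε (by rw [abs_of_pos hε]; exact hε) (by rw [abs_of_pos hε]; linarith)
    have hsum_range : ∑ i ∈ Finset.range (n+1), e i * ε ^ i = e n * ε ^ n := by
      rw [Finset.sum_range_succ,
        Finset.sum_eq_zero (fun k hk => by rw [ih k (Finset.mem_range.mp hk), zero_mul]), zero_add]
    have htail' : HasSum (fun j => e (j + (n+1)) * ε ^ (j + (n+1))) (-(e n * ε ^ n)) := by
      refine (hasSum_nat_add_iff (f := fun k => e k * ε ^ k) (n+1)).mpr ?_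
      rw [hsum_range]
      simpa using hs
    have hbound : ∀ j, |e (j + (n+1)) * ε ^ (j + (n+1))| ≤ (C * t ^ (n+1)) * t ^ j := by
      intro j
      have h1 : e (j + (n+1)) * ε ^ (j + (n+1))
          = (e (j + (n+1)) * r ^ (j + (n+1))) * t ^ (j + (n+1)) := by
        rw [hεdef, mul_pow]; ring
      rw [h1, abs_mul, abs_pow, abs_of_pos ht]
      calc |e (j + (n+1)) * r ^ (j + (n+1))| * t ^ (j + (n+1))
          ≤ C * t ^ (j + (n+1)) := mul_le_mul_of_nonneg_right (hC _) (pow_nonneg ht.le _)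
        _ = (C * t ^ (n+1)) * t ^ j := by rw [pow_add]; ring
    have hgeo : Summable fun j : ℕ => (C * t ^ (n+1)) * t ^ j :=
      (summable_geometric_of_lt_one ht.le (by linarith)).mul_left _
    have habs_le : |∑' j, e (j + (n+1)) * ε ^ (j + (n+1))|
        ≤ ∑' j, |e (j + (n+1)) * ε ^ (j + (n+1))| := by
      have hh := norm_tsum_le_tsum_norm (f := fun j => e (j + (n+1)) * ε ^ (j + (n+1)))
        (by simpa only [Real.norm_eq_abs] using htail'.summable.abs)
      simpa only [Real.norm_eq_abs] using hh
    have hest : |e n * ε ^ n| ≤ (C * t ^ (n+1)) * (1 - t)⁻¹ := by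
      calc |e n * ε ^ n| = |∑' j, e (j + (n+1)) * ε ^ (j + (n+1))| := by
            rw [htail'.tsum_eq, abs_neg]
        _ ≤ ∑' j, |e (j + (n+1)) * ε ^ (j + (n+1))| := habs_le
        _ ≤ ∑' j, (C * t ^ (n+1)) * t ^ j :=
            Summable.tsum_le_tsum hbound htail'.summable.abs hgeo
        _ = (C * t ^ (n+1)) * (1 - t)⁻¹ := by
            rw [tsum_mul_left, tsum_geometric_of_lt_one ht.le (by linarith)]
    have hεn : |e n * ε ^ n| = |e n| * t ^ n * r ^ n := by
      rw [abs_mul, hεdef, mul_pow, abs_of_pos (mul_pos (pow_pos ht n) (pow_pos hr n))]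
      ring
    have hinv : (1 - t)⁻¹ ≤ 2 := by
      rw [inv_le_iff_one_le_mul₀ (by linarith)]; linarith
    have htn : 0 < t ^ n := pow_pos ht n
    have h2 : |e n| * t ^ n * r ^ n ≤ (C * t ^ (n+1)) * 2 := by
      rw [← hεn]
      exact hest.trans (mul_le_mul_of_nonneg_left hinv (by positivity))
    have h3 : C * t ^ (n+1) * 2 = (2 * C * t) * t ^ n := by rw [pow_succ]; ring
    rw [h3] at h2
    exact le_of_mul_le_mul_right (by nlinarith) htn
  by_contra hne
  have hpos : 0 < |e n| := abs_pos.mpr hne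
  set t := min (1/4) (|e n| * r ^ n / (4 * (C + 1))) with htdef
  have ht : 0 < t := lt_min (by norm_num) (by positivity)
  have ht2 : t < 1/2 := lt_of_le_of_lt (min_le_left _ _) (by norm_num)
  have hk := key t ht ht2
  have htle : t ≤ |e n| * r ^ n / (4 * (C + 1)) := min_le_right _ _
  have h4 : t * (4 * (C + 1)) ≤ |e n| * r ^ n := by
    rw [← le_div_iff₀ (by positivity)]; exact htle
  nlinarith [mul_pos hpos hrn]

/-- Dividing a `HasSum` of the form `∑ u k * ε ^ (κ + k)` by `ε ^ κ`. -/
lemma hasSum_shift_zpow {ε : ℝ} (hε : ε ≠ 0) {u : ℕ → ℝ} {κ : ℤ} {S : ℝ}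
    (h : HasSum (fun k : ℕ => u k * ε ^ (κ + (k : ℤ))) S) :
    HasSum (fun k : ℕ => u k * ε ^ k) ((ε ^ κ)⁻¹ * S) := by
  have h2 := h.mul_left ((ε ^ κ)⁻¹)
  have heq : (fun k : ℕ => (ε ^ κ)⁻¹ * (u k * ε ^ (κ + (k : ℤ))))
      = fun k : ℕ => u k * ε ^ k := by
    funext k
    rw [zpow_add₀ hε, zpow_natCast]
    have : (ε ^ κ) ≠ 0 := zpow_ne_zero _ hε
    field_simp
  rwa [heq] at h2

/-- The coefficient-comparison core, stated for a fixed point `x` and coefficient index `n`. -/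
lemma laurent_core (d M : ℕ) (κ : ℤ) (ρ : ℝ) (hρ : 0 < ρ)
    (I : Set ℝ)
    (A : Fin (d + 1) → Fin (M + 1) → Polynomial ℝ)
    (F : ℤ → ℝ → ℝ) (h : ℤ → ℝ → ℝ) (J : ℝ → ℝ → ℝ)
    (hJsum : ∀ x ∈ I, ∀ ε : ℝ, 0 < |ε| → |ε| < ρ → ∀ i : ℕ, i ≤ d →
      HasSum (fun k : ℕ => iteratedDeriv i (F (κ + k)) x * ε ^ (κ + (k : ℤ)))
        (iteratedDeriv i (fun τ : ℝ => J ε τ) x))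
    (hhsum : ∀ x ∈ I, ∀ ε : ℝ, 0 < |ε| → |ε| < ρ →
      HasSum (fun k : ℕ => h (κ + k) x * ε ^ (κ + (k : ℤ)))
        (∑ i : Fin (d + 1), (∑ l : Fin (M + 1), (A i l).eval x * ε ^ (l : ℕ)) *
          iteratedDeriv (i : ℕ) (fun τ : ℝ => J ε τ) x))
    (x : ℝ) (hx : x ∈ I) (n : ℕ) :
    ∑ i : Fin (d + 1), ∑ l : Fin (M + 1),
        (if (l : ℕ) ≤ n then
          (A i l).eval x * iteratedDeriv (i : ℕ) (F (κ + (n : ℕ) - (l : ℕ))) x else 0)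
        = h (κ + n) x := by
  set c : ℕ → ℝ := fun k => ∑ i : Fin (d + 1), ∑ l : Fin (M + 1),
    (if (l : ℕ) ≤ k then
      (A i l).eval x * iteratedDeriv (i : ℕ) (F (κ + (k : ℕ) - (l : ℕ))) x else 0) with hcdef
  set b : ℕ → ℝ := fun k => h (κ + k) x with hbdef
  suffices hsuf : ∀ k, b k - c k = 0 by
    have := hsuf n; simp only [hbdef, hcdef] at this; linarith
  apply coeff_unique_zero _ ρ hρ
  intro ε hε1 hε2
  have hεne : ε ≠ 0 := by intro h0; rw [h0] at hε1; simp at hε1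
  have hb : HasSum (fun k => b k * ε ^ k)
      ((ε ^ κ)⁻¹ * ∑ i : Fin (d + 1), (∑ l : Fin (M + 1), (A i l).eval x * ε ^ (l : ℕ)) *
        iteratedDeriv (i : ℕ) (fun τ : ℝ => J ε τ) x) :=
    hasSum_shift_zpow hεne (hhsum x hx ε hε1 hε2)
  have hgi : ∀ i : Fin (d + 1), HasSum (fun k : ℕ => iteratedDeriv (i : ℕ) (F (κ + k)) x * ε ^ k)
      ((ε ^ κ)⁻¹ * iteratedDeriv (i : ℕ) (fun τ : ℝ => J ε τ) x) := fun i =>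
    hasSum_shift_zpow hεne (hJsum x hx ε hε1 hε2 i i.is_le)
  have hvil : ∀ i : Fin (d + 1), ∀ l : Fin (M + 1),
      HasSum (fun j : ℕ => if (l : ℕ) ≤ j then
          (A i l).eval x * iteratedDeriv (i : ℕ) (F (κ + (j : ℕ) - (l : ℕ))) x * ε ^ j else 0)
        ((A i l).eval x * ε ^ (l : ℕ) *
          ((ε ^ κ)⁻¹ * iteratedDeriv (i : ℕ) (fun τ : ℝ => J ε τ) x)) := by
    intro i l
    have h1 := (hgi i).mul_left ((A i l).eval x * ε ^ (l : ℕ))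
    rw [← Function.Injective.hasSum_iff (g := fun k : ℕ => k + (l : ℕ))
      (add_left_injective _) ?_]
    · have heq : ((fun j : ℕ => if (l : ℕ) ≤ j then
          (A i l).eval x * iteratedDeriv (i : ℕ) (F (κ + (j : ℕ) - (l : ℕ))) x * ε ^ j else 0)
          ∘ (fun k : ℕ => k + (l : ℕ)))
          = fun k : ℕ => (A i l).eval x * ε ^ (l : ℕ) *
              (iteratedDeriv (i : ℕ) (F (κ + k)) x * ε ^ k) := by
        funext k
        simp only [Function.comp]
        rw [if_pos (Nat.le_add_left _ _)]
        have harg : κ + ((k + (l : ℕ) : ℕ) : ℤ) - ((l : ℕ) : ℤ) = κ + (k : ℤ) := by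
          push_cast; ring
        rw [harg, pow_add]
        ring
      rw [heq]
      exact h1
    · intro j hj
      have hlj : ¬ ((l : ℕ) ≤ j) := by
        intro hle
        exact hj ⟨j - (l : ℕ), by show j - (l : ℕ) + (l : ℕ) = j; omega⟩
      simp [hlj]
  have hc : HasSum (fun j : ℕ => ∑ i : Fin (d + 1), ∑ l : Fin (M + 1),
      (if (l : ℕ) ≤ j then
        (A i l).eval x * iteratedDeriv (i : ℕ) (F (κ + (j : ℕ) - (l : ℕ))) x * ε ^ j else 0))
      (∑ i : Fin (d + 1), ∑ l : Fin (M + 1), (A i l).eval x * ε ^ (l : ℕ) *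
        ((ε ^ κ)⁻¹ * iteratedDeriv (i : ℕ) (fun τ : ℝ => J ε τ) x)) :=
    hasSum_sum (fun i _ => hasSum_sum (fun l _ => hvil i l))
  have hfun : (fun j : ℕ => ∑ i : Fin (d + 1), ∑ l : Fin (M + 1),
      (if (l : ℕ) ≤ j then
        (A i l).eval x * iteratedDeriv (i : ℕ) (F (κ + (j : ℕ) - (l : ℕ))) x * ε ^ j else 0))
      = fun j => c j * ε ^ j := by
    funext j
    rw [hcdef]
    simp only [Finset.sum_mul, ite_mul, zero_mul]
  have hval : (∑ i : Fin (d + 1), ∑ l : Fin (M + 1), (A i l).eval x * ε ^ (l : ℕ) *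
        ((ε ^ κ)⁻¹ * iteratedDeriv (i : ℕ) (fun τ : ℝ => J ε τ) x))
      = (ε ^ κ)⁻¹ * ∑ i : Fin (d + 1), (∑ l : Fin (M + 1), (A i l).eval x * ε ^ (l : ℕ)) *
        iteratedDeriv (i : ℕ) (fun τ : ℝ => J ε τ) x := by
    simp only [Finset.mul_sum, Finset.sum_mul]
    exact Finset.sum_congr rfl fun i _ => Finset.sum_congr rfl fun l _ => by ring
  rw [hfun, hval] at hc
  have := hb.sub hc
  rw [sub_self] at this
  have heq2 : (fun k : ℕ => b k * ε ^ k - c k * ε ^ k) = fun k => (b k - c k) * ε ^ k := by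
    funext k; ring
  rwa [heq2] at this

/-- Coefficient comparison for Laurent-series (in `ε`) solutions of a parameterized linear
differential equation `∑ a_i(ε,x) D_x^i J(ε,x) = ∑_{j ≥ κ} h_j(x) ε^j`. -/
theorem laurent_coefficient_comparison_ODE
    (d M : ℕ) (κ : ℤ) (ρ : ℝ) (hρ : 0 < ρ)
    (I : Set ℝ) (hIopen : IsOpen I) (hIconn : I.OrdConnected)
    (A : Fin (d + 1) → Fin (M + 1) → Polynomial ℝ)
    (F : ℤ → ℝ → ℝ)
    (h : ℤ → ℝ → ℝ)
    (J : ℝ → ℝ → ℝ)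
    (hFdiff : ∀ k : ℤ, κ ≤ k → ∀ x ∈ I, ContDiffAt ℝ d (F k) x)
    (hJdiff : ∀ x ∈ I, ∀ ε : ℝ, 0 < |ε| → |ε| < ρ → ContDiffAt ℝ d (fun τ : ℝ => J ε τ) x)
    (hJsum : ∀ x ∈ I, ∀ ε : ℝ, 0 < |ε| → |ε| < ρ → ∀ i : ℕ, i ≤ d →
      HasSum (fun k : ℕ => iteratedDeriv i (F (κ + k)) x * ε ^ (κ + (k : ℤ)))
        (iteratedDeriv i (fun τ : ℝ => J ε τ) x))
    (hhsum : ∀ x ∈ I, ∀ ε : ℝ, 0 < |ε| → |ε| < ρ →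
      HasSum (fun k : ℕ => h (κ + k) x * ε ^ (κ + (k : ℤ)))
        (∑ i : Fin (d + 1), (∑ l : Fin (M + 1), (A i l).eval x * ε ^ (l : ℕ)) *
          iteratedDeriv (i : ℕ) (fun τ : ℝ => J ε τ) x)) :
    (∀ m : ℤ, κ ≤ m → ∀ x ∈ I,
      ∑ i : Fin (d + 1), ∑ l : Fin (M + 1),
        (if (l : ℤ) ≤ m - κ then
          (A i l).eval x * iteratedDeriv (i : ℕ) (F (m - (l : ℕ))) x else 0)
        = h m x) ∧
    (∀ x ∈ I,
      ∑ i : Fin (d + 1), (A i 0).eval x * iteratedDeriv (i : ℕ) (F κ) x = h κ x) := by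
  have main : ∀ m : ℤ, κ ≤ m → ∀ x ∈ I,
      ∑ i : Fin (d + 1), ∑ l : Fin (M + 1),
        (if (l : ℤ) ≤ m - κ then
          (A i l).eval x * iteratedDeriv (i : ℕ) (F (m - (l : ℕ))) x else 0)
        = h m x := by
    intro m hm x hx
    obtain ⟨n, rfl⟩ : ∃ n : ℕ, m = κ + n := ⟨(m - κ).toNat, by omega⟩
    have core := laurent_core d M κ ρ hρ I A F h J hJsum hhsum x hx n
    rw [← core]
    refine Finset.sum_congr rfl (fun i _ => Finset.sum_congr rfl (fun l _ => ?_))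
    have hcond : ((l : ℕ) : ℤ) ≤ κ + (n : ℕ) - κ ↔ (l : ℕ) ≤ n := by omega
    by_cases hle : (l : ℕ) ≤ n
    · rw [if_pos (hcond.mpr hle), if_pos hle]
    · rw [if_neg (fun hh => hle (hcond.mp hh)), if_neg hle]
  refine ⟨main, ?_⟩
  intro x hx
  have := main κ le_rfl x hx
  rw [← this]
  refine Finset.sum_congr rfl (fun i _ => ?_)
  rw [Finset.sum_eq_single (0 : Fin (M + 1))]
  · norm_num
  · intro l _ hl
    have : ¬ ((l : ℤ) ≤ κ - κ) := by
      have : (l : ℕ) ≠ 0 := fun h0 => hl (Fin.ext h0)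
      omega
    rw [if_neg this]
  · intro habs
    exact absurd (Finset.mem_univ _) habs
end

section
/- For every h ∈ [0,1), the change of variables v = u/(1 + (u−1)z) transforms the double integral Y(h), and one has the equality of iterated improper integrals ∫_0^1 ∫_u^1 ( u·v·(1−u)·(1−v)·(1−u·h)·(1−(1−v)·h) )^{−1/2} dv du = ∫_0^1 ∫_0^1 ( (1−h·u)·(1−z)·(1−z·(1−u))·(1−z·(1−u)−h·(1−u)·(1−z)) )^{−1/2} dz du, both sides being finite. -/
open MeasureTheory Set

-- integrability of (1-z)^(-3/4) on Ioo 0 1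
lemma int_rpow_one_sub : IntegrableOn (fun z : ℝ => (1 - z) ^ (-(3/4) : ℝ)) (Ioo 0 1) volume := by
  have h1 : IntervalIntegrable (fun x : ℝ => x ^ (-(3/4) : ℝ)) volume 0 1 :=
    intervalIntegral.intervalIntegrable_rpow' (by norm_num)
  have h2 := h1.comp_sub_left 1
  simp only [sub_zero, sub_self] at h2
  exact (intervalIntegrable_iff_integrableOn_Ioo_of_le (by norm_num)).1 h2.symm

lemma int_rpow_self : IntegrableOn (fun u : ℝ => u ^ (-(3/4) : ℝ)) (Ioo 0 1) volume :=
  (intervalIntegrable_iff_integrableOn_Ioo_of_le (by norm_num)).1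
    (intervalIntegral.intervalIntegrable_rpow' (by norm_num))

lemma sqrtB_ge (h u z : ℝ) (h0 : 0 ≤ h) (h1 : h < 1) (hu : u ∈ Ioo (0:ℝ) 1)
    (hz : z ∈ Ioo (0:ℝ) 1) :
    (1 - h) * (u ^ ((3:ℝ)/4) * (1 - z) ^ ((3:ℝ)/4)) ≤
      Real.sqrt ((1 - h * u) * (1 - z) * (1 - z * (1 - u)) *
        (1 - z * (1 - u) - h * (1 - u) * (1 - z))) := by
  obtain ⟨hu0, hu1⟩ := hu
  obtain ⟨hz0, hz1⟩ := hz
  set t := 1 - z with ht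
  have ht0 : 0 < t := by simp [ht]; linarith
  have hD : 0 < 1 - z * (1 - u) := by nlinarith
  set D := 1 - z * (1 - u) with hDdef
  have hDu : u ≤ D := by simp [hDdef]; nlinarith
  have hDt : t ≤ D := by simp [hDdef, ht]; nlinarith
  have hD34 : u ^ ((3:ℝ)/4) * t ^ ((1:ℝ)/4) ≤ D := by
    calc u ^ ((3:ℝ)/4) * t ^ ((1:ℝ)/4)
        ≤ D ^ ((3:ℝ)/4) * D ^ ((1:ℝ)/4) := by
          apply mul_le_mul (Real.rpow_le_rpow hu0.le hDu (by norm_num))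
            (Real.rpow_le_rpow ht0.le hDt (by norm_num))
            (Real.rpow_nonneg ht0.le _) (Real.rpow_nonneg hD.le _)
      _ = D := by rw [← Real.rpow_add hD]; norm_num
  have step2 : u ^ ((3:ℝ)/4) * t ^ ((3:ℝ)/4) ≤ Real.sqrt t * D := by
    rw [Real.sqrt_eq_rpow]
    have h34 : t ^ ((3:ℝ)/4) = t ^ ((1:ℝ)/2) * t ^ ((1:ℝ)/4) := by
      rw [← Real.rpow_add ht0]; norm_num
    calc u ^ ((3:ℝ)/4) * t ^ ((3:ℝ)/4)
        = t ^ ((1:ℝ)/2) * (u ^ ((3:ℝ)/4) * t ^ ((1:ℝ)/4)) := by rw [h34]; ring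
      _ ≤ t ^ ((1:ℝ)/2) * D := by
          exact mul_le_mul_of_nonneg_left hD34 (Real.rpow_nonneg ht0.le _)
  have step1 : (1 - h) * (Real.sqrt t * D) ≤
      Real.sqrt ((1 - h * u) * t * D * (D - h * (1 - u) * t)) := by
    have hst := Real.sq_sqrt ht0.le
    have hstn := Real.sqrt_nonneg t
    have ha : 1 - h ≤ 1 - h * u := by nlinarith
    have h4 : (1 - h) * D ≤ D - h * (1 - u) * t := by
      have : (1 - u) * t ≤ D := by simp [hDdef, ht]; nlinarith
      nlinarith
    have hc : 0 ≤ (1 - h) * (Real.sqrt t * D) :=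
      mul_nonneg (by linarith) (mul_nonneg hstn hD.le)
    have hmain : (1 - h) * ((1 - h) * D) ≤ (1 - h * u) * (D - h * (1 - u) * t) :=
      mul_le_mul ha h4 (mul_nonneg (by linarith) hD.le) (by linarith)
    rw [show (1 - h) * (Real.sqrt t * D) =
        Real.sqrt (((1 - h) * (Real.sqrt t * D)) ^ 2) from (Real.sqrt_sq hc).symm]
    apply Real.sqrt_le_sqrt
    nlinarith [hst, mul_le_mul_of_nonneg_right hmain (mul_nonneg ht0.le hD.le)]
  calc (1 - h) * (u ^ ((3:ℝ)/4) * t ^ ((3:ℝ)/4))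
      ≤ (1 - h) * (Real.sqrt t * D) := by
        exact mul_le_mul_of_nonneg_left step2 (by linarith)
    _ ≤ _ := step1

lemma G_bound (h u z : ℝ) (h0 : 0 ≤ h) (h1 : h < 1) (hu : u ∈ Ioo (0:ℝ) 1)
    (hz : z ∈ Ioo (0:ℝ) 1) :
    (Real.sqrt ((1 - h * u) * (1 - z) * (1 - z * (1 - u)) *
        (1 - z * (1 - u) - h * (1 - u) * (1 - z))))⁻¹ ≤
      (1 - h)⁻¹ * (u ^ (-((3:ℝ)/4)) * (1 - z) ^ (-((3:ℝ)/4))) := by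
  have hkey := sqrtB_ge h u z h0 h1 hu hz
  have hc : 0 < (1 - h) * (u ^ ((3:ℝ)/4) * (1 - z) ^ ((3:ℝ)/4)) := by
    apply mul_pos (by linarith)
    exact mul_pos (Real.rpow_pos_of_pos hu.1 _) (Real.rpow_pos_of_pos (by linarith [hz.2]) _)
  have := inv_anti₀ hc hkey
  calc (Real.sqrt _)⁻¹ ≤ ((1 - h) * (u ^ ((3:ℝ)/4) * (1 - z) ^ ((3:ℝ)/4)))⁻¹ := this
    _ = (1 - h)⁻¹ * (u ^ (-((3:ℝ)/4)) * (1 - z) ^ (-((3:ℝ)/4))) := by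
        rw [Real.rpow_neg hu.1.le, Real.rpow_neg (by linarith [hz.2] : (0:ℝ) ≤ 1 - z),
          mul_inv, mul_inv]

lemma G_meas (h u : ℝ) : Measurable (fun z : ℝ =>
    (Real.sqrt ((1 - h * u) * (1 - z) * (1 - z * (1 - u)) *
      (1 - z * (1 - u) - h * (1 - u) * (1 - z))))⁻¹) :=
  ((Real.continuous_sqrt.comp (by continuity)).measurable).inv

lemma G_int (h u : ℝ) (h0 : 0 ≤ h) (h1 : h < 1) (hu : u ∈ Ioo (0:ℝ) 1) :
    IntegrableOn (fun z : ℝ =>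
      (Real.sqrt ((1 - h * u) * (1 - z) * (1 - z * (1 - u)) *
        (1 - z * (1 - u) - h * (1 - u) * (1 - z))))⁻¹) (Ioo (0:ℝ) 1) volume := by
  have hbint : IntegrableOn
      (fun z : ℝ => ((1 - h)⁻¹ * u ^ (-((3:ℝ)/4))) * (1 - z) ^ (-((3:ℝ)/4)))
      (Ioo (0:ℝ) 1) volume := by
    have h34 : (-((3:ℝ)/4)) = (-(3/4) : ℝ) := by norm_num
    rw [h34]
    exact int_rpow_one_sub.const_mul _
  apply Integrable.mono hbint ((G_meas h u).aestronglyMeasurable.restrict)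
  rw [ae_restrict_iff' measurableSet_Ioo]
  filter_upwards with z hz
  have hb := G_bound h u z h0 h1 hu hz
  have hG0 : (0:ℝ) ≤ (Real.sqrt ((1 - h * u) * (1 - z) * (1 - z * (1 - u)) *
      (1 - z * (1 - u) - h * (1 - u) * (1 - z))))⁻¹ :=
    inv_nonneg.2 (Real.sqrt_nonneg _)
  have hbnn : (0:ℝ) ≤ ((1 - h)⁻¹ * u ^ (-((3:ℝ)/4))) * (1 - z) ^ (-((3:ℝ)/4)) := by
    apply mul_nonneg (mul_nonneg (inv_nonneg.2 (by linarith)) (Real.rpow_nonneg hu.1.le _))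
      (Real.rpow_nonneg (by linarith [hz.2]) _)
  rw [Real.norm_eq_abs, Real.norm_eq_abs, abs_of_nonneg hG0, abs_of_nonneg hbnn]
  calc _ ≤ (1 - h)⁻¹ * (u ^ (-((3:ℝ)/4)) * (1 - z) ^ (-((3:ℝ)/4))) := hb
    _ = _ := by ring

lemma G_integral_le (h u : ℝ) (h0 : 0 ≤ h) (h1 : h < 1) (hu : u ∈ Ioo (0:ℝ) 1) :
    (∫ z in Ioo (0:ℝ) 1,
      (Real.sqrt ((1 - h * u) * (1 - z) * (1 - z * (1 - u)) *
        (1 - z * (1 - u) - h * (1 - u) * (1 - z))))⁻¹) ≤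
    ((1 - h)⁻¹ * ∫ z in Ioo (0:ℝ) 1, (1 - z) ^ (-((3:ℝ)/4))) * u ^ (-((3:ℝ)/4)) := by
  have hbint : IntegrableOn
      (fun z : ℝ => ((1 - h)⁻¹ * u ^ (-((3:ℝ)/4))) * (1 - z) ^ (-((3:ℝ)/4)))
      (Ioo (0:ℝ) 1) volume := by
    have h34 : (-((3:ℝ)/4)) = (-(3/4) : ℝ) := by norm_num
    rw [h34]; exact int_rpow_one_sub.const_mul _
  calc _ ≤ ∫ z in Ioo (0:ℝ) 1,
        ((1 - h)⁻¹ * u ^ (-((3:ℝ)/4))) * (1 - z) ^ (-((3:ℝ)/4)) := by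
        apply setIntegral_mono_on (G_int h u h0 h1 hu) hbint measurableSet_Ioo
        intro z hz
        calc _ ≤ (1 - h)⁻¹ * (u ^ (-((3:ℝ)/4)) * (1 - z) ^ (-((3:ℝ)/4))) :=
              G_bound h u z h0 h1 hu hz
          _ = _ := by ring
    _ = _ := by
        rw [MeasureTheory.integral_const_mul]; ring

lemma cov (h u : ℝ) (h0 : 0 ≤ h) (h1 : h < 1) (hu : u ∈ Ioo (0:ℝ) 1) :
    (IntegrableOn
        (fun v : ℝ =>
          (Real.sqrt (u * v * (1 - u) * (1 - v) * (1 - u * h) * (1 - (1 - v) * h)))⁻¹)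
        (Ioo u 1) volume ↔
      IntegrableOn
        (fun z : ℝ =>
          (Real.sqrt ((1 - h * u) * (1 - z) * (1 - z * (1 - u)) *
            (1 - z * (1 - u) - h * (1 - u) * (1 - z))))⁻¹)
        (Ioo (0:ℝ) 1) volume) ∧
    (∫ v in Ioo u 1,
        (Real.sqrt (u * v * (1 - u) * (1 - v) * (1 - u * h) * (1 - (1 - v) * h)))⁻¹) =
      ∫ z in Ioo (0:ℝ) 1,
        (Real.sqrt ((1 - h * u) * (1 - z) * (1 - z * (1 - u)) *
          (1 - z * (1 - u) - h * (1 - u) * (1 - z))))⁻¹ := by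
  obtain ⟨hu0, hu1⟩ := hu
  set F := fun v : ℝ =>
    (Real.sqrt (u * v * (1 - u) * (1 - v) * (1 - u * h) * (1 - (1 - v) * h)))⁻¹ with hF
  set g := fun z : ℝ => u * (1 - (1 - u) * z)⁻¹ with hg
  set g' := fun z : ℝ => u * (1 - u) / (1 - (1 - u) * z) ^ 2 with hg'
  have hDpos : ∀ z ∈ Ioo (0:ℝ) 1, 0 < 1 - (1 - u) * z := by
    intro z hz; nlinarith [hz.1, hz.2]
  have himg : g '' Ioo (0:ℝ) 1 = Ioo u 1 := by
    ext v
    constructor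
    · rintro ⟨z, hz, rfl⟩
      have hD := hDpos z hz
      have hD1 : 1 - (1 - u) * z < 1 := by nlinarith [hz.1]
      have hDu : u < 1 - (1 - u) * z := by nlinarith [hz.2]
      constructor
      · rw [show g z = u / (1 - (1 - u) * z) from by rw [hg]; ring, lt_div_iff₀ hD]
        nlinarith
      · rw [show g z = u / (1 - (1 - u) * z) from by rw [hg]; ring, div_lt_one hD]
        exact hDu
    · rintro ⟨hv1, hv2⟩
      have hv0 : 0 < v := lt_trans hu0 hv1
      refine ⟨(v - u) / (v * (1 - u)), ⟨?_, ?_⟩, ?_⟩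
      · apply div_pos (by linarith) (by nlinarith)
      · rw [div_lt_one (by nlinarith)]; nlinarith
      · rw [hg]
        have hne : v * (1 - u) ≠ 0 := (mul_pos hv0 (by linarith)).ne'
        show u * (1 - (1 - u) * ((v - u) / (v * (1 - u))))⁻¹ = v
        have hq : 1 - (1 - u) * ((v - u) / (v * (1 - u))) = u / v := by
          field_simp; ring
        rw [hq]
        field_simp
  have hderiv : ∀ z ∈ Ioo (0:ℝ) 1, HasDerivWithinAt g (g' z) (Ioo (0:ℝ) 1) z := by
    intro z hz
    have hD := hDpos z hz
    have hq : HasDerivAt (fun x : ℝ => 1 - (1 - u) * x) (-((1 - u) * 1)) z :=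
      ((hasDerivAt_id z).const_mul (1 - u)).const_sub 1
    have h2 := (hq.inv hD.ne').const_mul u
    have h3 : u * (-(-((1 - u) * 1)) / (1 - (1 - u) * z) ^ 2) = g' z := by
      rw [hg']; ring
    rw [h3] at h2
    exact h2.hasDerivWithinAt
  have hinj : InjOn g (Ioo (0:ℝ) 1) := by
    intro a ha b hb hab
    have hDa := hDpos a ha
    have hDb := hDpos b hb
    rw [hg] at hab
    simp only at hab
    have h2 : (1 - (1 - u) * a)⁻¹ = (1 - (1 - u) * b)⁻¹ :=
      mul_left_cancel₀ hu0.ne' hab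
    have h3 : 1 - (1 - u) * a = 1 - (1 - u) * b := inv_injective h2
    have h4 : (1 - u) * a = (1 - u) * b := by linarith
    exact mul_left_cancel₀ (by linarith : (1:ℝ) - u ≠ 0) h4
  have hpt : ∀ z ∈ Ioo (0:ℝ) 1, |g' z| • F (g z) =
      (Real.sqrt ((1 - h * u) * (1 - z) * (1 - z * (1 - u)) *
        (1 - z * (1 - u) - h * (1 - u) * (1 - z))))⁻¹ := by
    intro z hz
    have hD := hDpos z hz
    have hg'pos : 0 < g' z := by
      rw [hg']
      exact div_pos (by nlinarith) (by positivity)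
    have hAB : u * (g z) * (1 - u) * (1 - g z) * (1 - u * h) * (1 - (1 - g z) * h) =
        (g' z) ^ 2 * ((1 - h * u) * (1 - z) * (1 - z * (1 - u)) *
          (1 - z * (1 - u) - h * (1 - u) * (1 - z))) := by
      rw [hg, hg']
      simp only
      field_simp
      ring
    rw [smul_eq_mul, hF]
    simp only
    rw [hAB, Real.sqrt_mul (sq_nonneg _), Real.sqrt_sq hg'pos.le,
      abs_of_pos hg'pos, mul_inv, ← mul_assoc, mul_inv_cancel₀ hg'pos.ne', one_mul]
  have hiff := integrableOn_image_iff_integrableOn_abs_deriv_smul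
    measurableSet_Ioo hderiv hinj F
  rw [himg] at hiff
  have heq := integral_image_eq_integral_abs_deriv_smul
    measurableSet_Ioo hderiv hinj F
  rw [himg] at heq
  constructor
  · rw [hiff]
    exact integrableOn_congr_fun (fun z hz => hpt z hz) measurableSet_Ioo
  · rw [heq]
    exact setIntegral_congr_fun measurableSet_Ioo (fun z hz => hpt z hz)

lemma outer_meas (h : ℝ) : AEStronglyMeasurable
    (fun u : ℝ => ∫ z in Ioo (0:ℝ) 1,
      (Real.sqrt ((1 - h * u) * (1 - z) * (1 - z * (1 - u)) *
        (1 - z * (1 - u) - h * (1 - u) * (1 - z))))⁻¹)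
    (volume.restrict (Ioo (0:ℝ) 1)) := by
  have hm : Measurable fun p : ℝ × ℝ =>
      (Real.sqrt ((1 - h * p.1) * (1 - p.2) * (1 - p.2 * (1 - p.1)) *
        (1 - p.2 * (1 - p.1) - h * (1 - p.1) * (1 - p.2))))⁻¹ :=
    ((Real.continuous_sqrt.comp (by continuity)).measurable).inv
  exact (hm.stronglyMeasurable.integral_prod_right'
    (ν := volume.restrict (Ioo (0:ℝ) 1))).aestronglyMeasurable.restrict

lemma outer_int (h : ℝ) (h0 : 0 ≤ h) (h1 : h < 1) :
    IntegrableOn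
      (fun u : ℝ => ∫ z in Ioo (0:ℝ) 1,
        (Real.sqrt ((1 - h * u) * (1 - z) * (1 - z * (1 - u)) *
          (1 - z * (1 - u) - h * (1 - u) * (1 - z))))⁻¹)
      (Ioo (0:ℝ) 1) volume := by
  set K := ∫ z in Ioo (0:ℝ) 1, (1 - z) ^ (-((3:ℝ)/4)) with hK
  have hK0 : 0 ≤ K := setIntegral_nonneg measurableSet_Ioo
    (fun z hz => Real.rpow_nonneg (by linarith [hz.2]) _)
  have hbint : IntegrableOn (fun u : ℝ => ((1 - h)⁻¹ * K) * u ^ (-((3:ℝ)/4)))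
      (Ioo (0:ℝ) 1) volume := by
    have h34 : (-((3:ℝ)/4)) = (-(3/4) : ℝ) := by norm_num
    rw [h34]; exact int_rpow_self.const_mul _
  apply Integrable.mono hbint (outer_meas h)
  rw [ae_restrict_iff' measurableSet_Ioo]
  filter_upwards with u hu
  have hI0 : (0:ℝ) ≤ ∫ z in Ioo (0:ℝ) 1,
      (Real.sqrt ((1 - h * u) * (1 - z) * (1 - z * (1 - u)) *
        (1 - z * (1 - u) - h * (1 - u) * (1 - z))))⁻¹ :=
    setIntegral_nonneg measurableSet_Ioo (fun z _ => inv_nonneg.2 (Real.sqrt_nonneg _))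
  have hb0 : (0:ℝ) ≤ ((1 - h)⁻¹ * K) * u ^ (-((3:ℝ)/4)) :=
    mul_nonneg (mul_nonneg (inv_nonneg.2 (by linarith)) hK0)
      (Real.rpow_nonneg hu.1.le _)
  rw [Real.norm_eq_abs, Real.norm_eq_abs, abs_of_nonneg hI0, abs_of_nonneg hb0]
  exact G_integral_le h u h0 h1 hu

/-- The change of variables `v = u/(1 + (u-1)z)` transforms Broadhurst's double integral
`Y(h)` into an integral over the unit square; both sides are finite (integrable) and equal. -/
theorem broadhurst_change_of_variables (h : ℝ) (h0 : 0 ≤ h) (h1 : h < 1) :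
    (∀ u ∈ Set.Ioo (0 : ℝ) 1,
      IntegrableOn
        (fun v : ℝ =>
          (Real.sqrt (u * v * (1 - u) * (1 - v) * (1 - u * h) * (1 - (1 - v) * h)))⁻¹)
        (Set.Ioo u 1) volume) ∧
    IntegrableOn
      (fun u : ℝ => ∫ v in Set.Ioo u 1,
        (Real.sqrt (u * v * (1 - u) * (1 - v) * (1 - u * h) * (1 - (1 - v) * h)))⁻¹)
      (Set.Ioo (0 : ℝ) 1) volume ∧
    (∀ u ∈ Set.Ioo (0 : ℝ) 1,
      IntegrableOn
        (fun z : ℝ =>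
          (Real.sqrt ((1 - h * u) * (1 - z) * (1 - z * (1 - u)) *
            (1 - z * (1 - u) - h * (1 - u) * (1 - z))))⁻¹)
        (Set.Ioo (0 : ℝ) 1) volume) ∧
    IntegrableOn
      (fun u : ℝ => ∫ z in Set.Ioo (0 : ℝ) 1,
        (Real.sqrt ((1 - h * u) * (1 - z) * (1 - z * (1 - u)) *
          (1 - z * (1 - u) - h * (1 - u) * (1 - z))))⁻¹)
      (Set.Ioo (0 : ℝ) 1) volume ∧
    (∫ u in Set.Ioo (0 : ℝ) 1, ∫ v in Set.Ioo u 1,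
        (Real.sqrt (u * v * (1 - u) * (1 - v) * (1 - u * h) * (1 - (1 - v) * h)))⁻¹)
      = ∫ u in Set.Ioo (0 : ℝ) 1, ∫ z in Set.Ioo (0 : ℝ) 1,
          (Real.sqrt ((1 - h * u) * (1 - z) * (1 - z * (1 - u)) *
            (1 - z * (1 - u) - h * (1 - u) * (1 - z))))⁻¹ := by
  have heqon : EqOn
      (fun u : ℝ => ∫ v in Ioo u 1,
        (Real.sqrt (u * v * (1 - u) * (1 - v) * (1 - u * h) * (1 - (1 - v) * h)))⁻¹)
      (fun u : ℝ => ∫ z in Ioo (0:ℝ) 1,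
        (Real.sqrt ((1 - h * u) * (1 - z) * (1 - z * (1 - u)) *
          (1 - z * (1 - u) - h * (1 - u) * (1 - z))))⁻¹)
      (Ioo (0:ℝ) 1) := fun u hu => (cov h u h0 h1 hu).2
  refine ⟨fun u hu => (cov h u h0 h1 hu).1.mpr (G_int h u h0 h1 hu),
    (integrableOn_congr_fun heqon measurableSet_Ioo).mpr (outer_int h h0 h1),
    fun u hu => G_int h u h0 h1 hu, outer_int h h0 h1,
    setIntegral_congr_fun measurableSet_Ioo heqon⟩
end

section
/- The function f is differentiable on ℝ \ {0} and for every real x ≠ 0: 2·f(x) + x·f'(x) = (8·(e^x − e^{−x})/x²) · ∫_0^x (e^t − e^{−t})/t dt. -/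
/-!
Integrating out `w₂` turns `exp (-x w₁ w₂)` into `E (x w₁)`, where `E c = ∫_{-1}^1 exp (c w) dw`
is the continuous even function equal to `(e^c - e^{-c}) / c` for `c ≠ 0`. Substituting
`t = x w₁` then gives `∫∫ exp (-x w₁ w₂) = 2 S(x) / x` with `S(x) = ∫_0^x E`, and the quadruple
integral factors as the square of this double integral. Hence `f = 4 S² / x²` off `0`, and since
`S' = E` by the fundamental theorem of calculus, `2 f + x f' = 8 S E / x`, which is the claim.
-/

open MeasureTheory intervalIntegral Filter Topology

theorem intervalIntegral.integral_symmetric_of_even {E : Type*} [NormedAddCommGroup E]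
    [NormedSpace ℝ E] {g : ℝ → E} (hg : ∀ t, g (-t) = g t) {x : ℝ}
    (hint : IntervalIntegrable g volume 0 x) :
    ∫ t in -x..x, g t = (2 : ℝ) • ∫ t in 0..x, g t := by
  have hreflect : ∫ t in -x..0, g t = ∫ t in 0..x, g t := by
    simpa [hg] using (integral_comp_neg (a := 0) (b := x) g).symm
  have hint' : IntervalIntegrable g volume (-x) 0 := by
    simpa [hg] using ((IntervalIntegrable.iff_comp_neg (f := g)).1 hint).symm
  rw [← integral_add_adjacent_intervals hint' hint, hreflect, two_smul]

/-- `2 sinh c / c`, extended continuously by `2` at `c = 0`. -/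
noncomputable def expIntegralUnit (c : ℝ) : ℝ := ∫ w in (-1 : ℝ)..1, Real.exp (c * w)

theorem continuous_expIntegralUnit : Continuous expIntegralUnit :=
  continuous_parametric_intervalIntegral_of_continuous' (by fun_prop) _ _

theorem expIntegralUnit_neg (c : ℝ) : expIntegralUnit (-c) = expIntegralUnit c := by
  simpa [expIntegralUnit, neg_mul, mul_neg] using
    integral_comp_neg (a := -1) (b := 1) (fun w => Real.exp (c * w))

theorem expIntegralUnit_of_ne_zero {c : ℝ} (hc : c ≠ 0) :
    expIntegralUnit c = (Real.exp c - Real.exp (-c)) / c := by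
  rw [expIntegralUnit, integral_comp_mul_left (fun u => Real.exp u) hc, integral_exp]
  simp [div_eq_inv_mul]

theorem integral_expIntegralUnit (x : ℝ) :
    ∫ t in (0 : ℝ)..x, expIntegralUnit t = ∫ t in (0 : ℝ)..x, (Real.exp t - Real.exp (-t)) / t :=
  integral_congr_ae <| (Measure.ae_ne volume 0).mono fun _ ht _ => expIntegralUnit_of_ne_zero ht

theorem integral_integral_exp_neg_mul_mul {x : ℝ} (hx : x ≠ 0) :
    ∫ w₁ in (-1 : ℝ)..1, ∫ w₂ in (-1 : ℝ)..1, Real.exp (-x * (w₁ * w₂)) =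
      2 * (∫ t in (0 : ℝ)..x, expIntegralUnit t) / x := by
  have hinner : ∀ w₁,
      ∫ w₂ in (-1 : ℝ)..1, Real.exp (-x * (w₁ * w₂)) = expIntegralUnit (x * w₁) := by
    intro w₁
    rw [← expIntegralUnit_neg, expIntegralUnit]
    simp only [neg_mul, mul_assoc]
  simp only [hinner]
  rw [integral_comp_mul_left expIntegralUnit hx, mul_neg_one, mul_one,
    integral_symmetric_of_even expIntegralUnit_neg
      (continuous_expIntegralUnit.intervalIntegrable _ _)]
  simp [div_eq_inv_mul]

theorem integral_exp_neg_mul_add_eq_sq (x : ℝ) :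
    ∫ w₁ in (-1 : ℝ)..1, ∫ w₂ in (-1 : ℝ)..1, ∫ w₃ in (-1 : ℝ)..1, ∫ w₄ in (-1 : ℝ)..1,
        Real.exp (-x * (w₁ * w₂ + w₃ * w₄)) =
      (∫ w₁ in (-1 : ℝ)..1, ∫ w₂ in (-1 : ℝ)..1, Real.exp (-x * (w₁ * w₂))) ^ 2 := by
  simp_rw [mul_add, Real.exp_add, intervalIntegral.integral_const_mul,
    intervalIntegral.integral_mul_const, sq]

/-- The quadruple integral `f(x) = ∫∫∫∫ exp(-x(w₁w₂ + w₃w₄))` over `[-1,1]⁴` is differentiable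
away from `0` and satisfies the first-order inhomogeneous ODE derived by cmAZIntegrate. -/
theorem quadruple_integral_first_order_ODE
    (f : ℝ → ℝ)
    (hf : ∀ x : ℝ, f x =
      ∫ w₁ in (-1 : ℝ)..1, ∫ w₂ in (-1 : ℝ)..1, ∫ w₃ in (-1 : ℝ)..1, ∫ w₄ in (-1 : ℝ)..1,
        Real.exp (-x * (w₁ * w₂ + w₃ * w₄))) :
    ∀ x : ℝ, x ≠ 0 →
      DifferentiableAt ℝ f x ∧
      2 * f x + x * deriv f x
        = 8 * (Real.exp x - Real.exp (-x)) / x ^ 2 *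
            ∫ t in (0 : ℝ)..x, (Real.exp t - Real.exp (-t)) / t := by
  intro x hx
  set S : ℝ → ℝ := fun y => ∫ t in (0 : ℝ)..y, expIntegralUnit t
  have hfS : f =ᶠ[𝓝 x] fun y => (2 * S y / y) ^ 2 := by
    filter_upwards [eventually_ne_nhds hx] with y hy
    rw [hf, integral_exp_neg_mul_add_eq_sq, integral_integral_exp_neg_mul_mul hy]
  have hS : HasDerivAt S (expIntegralUnit x) x :=
    (continuous_expIntegralUnit.integral_hasStrictDerivAt 0 x).hasDerivAt
  have hf' := (((hS.const_mul 2).div (hasDerivAt_id x) hx).pow 2).congr_of_eventuallyEq hfS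
  refine ⟨hf'.differentiableAt, ?_⟩
  rw [hf'.deriv, hfS.eq_of_nhds, ← integral_expIntegralUnit, expIntegralUnit_of_ne_zero hx]
  simp only [Pi.div_apply, id, S, Nat.cast_ofNat, Nat.reduceSub, pow_one]
  field_simp
  ring
end

section
/- The function f is six times differentiable on ℝ and for every real x: 0 = 32·(4x − 16x³ + 9x⁵)·f(x) − 4·(27 − 148x² + 598x⁴ − 63x⁶)·f'(x) − 4·(117x − 568x³ + 556x⁵ − 9x⁷)·f''(x) − (478x² − 2919x⁴ + 603x⁶)·f'''(x) − 5·(34x³ − 247x⁵ + 9x⁷)·f⁗(x) − (23x⁴ − 189x⁶)·f⁽⁵⁾(x) − (x⁵ − 9x⁷)·f⁽⁶⁾(x). -/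
/-!
Write `H(x) = ∫∫_{[-1,1]²} exp(-x u v) du dv`. The integrand of `f` factors, so `f = H²`.
`H` is the moment generating function of `-u v` for Lebesgue measure on the square, hence smooth
with `H⁽ᵏ⁾(x) = ∫∫ (-u v)ᵏ exp(-x u v)`, and it satisfies the third-order equation
`x² H''' + 5x H'' + (4 - x²) H' - x H = 0`: the integrand of the left side is
`∂ᵤ B(x, u, v) + ∂ᵥ B(x, v, u)` for a boundary term `B` vanishing at `u = ±1`.
Differentiating this equation up to three times and expanding `(H²)⁽ⁿ⁾` by Leibniz' rule, the
sixth-order equation for `f` is an explicit linear combination of the four resulting relations.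
-/

open MeasureTheory intervalIntegral
open Set Real ProbabilityTheory
open scoped ContDiff

lemma contDiff_mgf_of_integrableExpSet_eq_univ {Ω : Type*} {m : MeasurableSpace Ω}
    {μ : Measure Ω} {X : Ω → ℝ} (h : integrableExpSet X μ = univ) {n : WithTop ℕ∞} :
    ContDiff ℝ n (mgf X μ) :=
  AnalyticOnNhd.contDiff (by simpa [h] using analyticOnNhd_mgf (X := X) (μ := μ))

lemma Continuous.integrable_prod_restrict_Ioc {E : Type*} [NormedAddCommGroup E]
    {g : ℝ × ℝ → E} (hg : Continuous g) (a b c d : ℝ) :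
    Integrable g ((volume.restrict (Ioc a b)).prod (volume.restrict (Ioc c d))) := by
  rw [Measure.prod_restrict, ← Measure.volume_eq_prod]
  exact (hg.continuousOn.integrableOn_compact (isCompact_Icc.prod isCompact_Icc)).mono_set
    (prod_mono Ioc_subset_Icc_self Ioc_subset_Icc_self)

lemma integral_prod_eq_zero_of_hasDerivAt_fst {β : Type*} [MeasurableSpace β] {ν : Measure β}
    [SFinite ν] {a b : ℝ} (hab : a ≤ b) {F F' : ℝ → β → ℝ}
    (hF : ∀ v, ∀ u ∈ uIcc a b, HasDerivAt (F · v) (F' u v) u)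
    (hF' : ∀ v, IntervalIntegrable (F' · v) volume a b)
    (ha : ∀ v, F a v = 0) (hb : ∀ v, F b v = 0) :
    ∫ p, F' p.1 p.2 ∂(volume.restrict (Ioc a b)).prod ν = 0 := by
  by_cases hint : Integrable (fun p ↦ F' p.1 p.2) ((volume.restrict (Ioc a b)).prod ν)
  · rw [integral_prod_symm _ hint]
    refine integral_eq_zero_of_ae (ae_of_all _ fun v ↦ ?_)
    change ∫ u in Ioc a b, F' u v = 0
    rw [← integral_of_le hab, integral_eq_sub_of_hasDerivAt (hF v) (hF' v), ha, hb, sub_zero]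
  · exact integral_undef hint

-- At `k = 0` the truncated index `k - 1` is harmless: the coefficient `k ^ 2` vanishes.
lemma iteratedDeriv_ode {g : ℝ → ℝ} (hg : ContDiff ℝ ∞ g)
    (h : ∀ x, x ^ 2 * iteratedDeriv 3 g x + 5 * x * iteratedDeriv 2 g x
      + (4 - x ^ 2) * iteratedDeriv 1 g x - x * iteratedDeriv 0 g x = 0) (k : ℕ) (x : ℝ) :
    x ^ 2 * iteratedDeriv (k + 3) g x + (2 * k + 5) * x * iteratedDeriv (k + 2) g x
      + ((k + 2) ^ 2 - x ^ 2) * iteratedDeriv (k + 1) g x - (2 * k + 1) * x * iteratedDeriv k g x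
      - k ^ 2 * iteratedDeriv (k - 1) g x = 0 := by
  have hderiv (n : ℕ) (y : ℝ) :
      HasDerivAt (iteratedDeriv n g) (iteratedDeriv (n + 1) g y) y := by
    rw [iteratedDeriv_succ]
    exact (hg.differentiable_iteratedDeriv n (by exact_mod_cast WithTop.coe_lt_top _) y).hasDerivAt
  induction k generalizing x with
  | zero => simpa [show (2 : ℝ) ^ 2 = 4 by norm_num] using h x
  | succ k ih =>
    have hrelation_deriv : HasDerivAt (fun y ↦ y ^ 2 * iteratedDeriv (k + 3) g y
        + (2 * k + 5) * y * iteratedDeriv (k + 2) g y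
        + ((k + 2) ^ 2 - y ^ 2) * iteratedDeriv (k + 1) g y
        - (2 * k + 1) * y * iteratedDeriv k g y - k ^ 2 * iteratedDeriv (k - 1) g y)
        (x ^ 2 * iteratedDeriv (k + 4) g x + (2 * k + 7) * x * iteratedDeriv (k + 3) g x
          + ((k + 3) ^ 2 - x ^ 2) * iteratedDeriv (k + 2) g x
          - (2 * k + 3) * x * iteratedDeriv (k + 1) g x
          - (k + 1) ^ 2 * iteratedDeriv k g x) x := by
      have hlast : (k : ℝ) ^ 2 * iteratedDeriv (k - 1 + 1) g x = k ^ 2 * iteratedDeriv k g x := by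
        rcases k with _ | k <;> simp
      have hterm₃ := (hasDerivAt_pow 2 x).fun_mul (hderiv (k + 3) x)
      have hterm₂ := ((hasDerivAt_id' x).const_mul (2 * k + 5 : ℝ)).fun_mul (hderiv (k + 2) x)
      have hterm₁ := ((hasDerivAt_const x ((k + 2 : ℝ) ^ 2)).fun_sub (hasDerivAt_pow 2 x)).fun_mul
        (hderiv (k + 1) x)
      have hterm₀ := ((hasDerivAt_id' x).const_mul (2 * k + 1 : ℝ)).fun_mul (hderiv k x)
      have htermPrev := (hderiv (k - 1) x).const_mul ((k : ℝ) ^ 2)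
      have hsum := (((hterm₃.fun_add hterm₂).fun_add hterm₁).fun_sub hterm₀).fun_sub htermPrev
      refine hsum.congr_deriv ?_
      rw [hlast]
      push_cast
      ring
    rw [funext ih] at hrelation_deriv
    push_cast [Nat.add_sub_cancel]
    linear_combination hrelation_deriv.unique (hasDerivAt_const x 0)

noncomputable abbrev squareMeasure : Measure (ℝ × ℝ) :=
  (volume.restrict (Ioc (-1) 1)).prod (volume.restrict (Ioc (-1) 1))

noncomputable def squareMGF : ℝ → ℝ := mgf (fun p : ℝ × ℝ ↦ -(p.1 * p.2)) squareMeasure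

lemma integrableExpSet_neg_mul_squareMeasure :
    integrableExpSet (fun p : ℝ × ℝ ↦ -(p.1 * p.2)) squareMeasure = univ :=
  eq_univ_of_forall fun _ ↦ Continuous.integrable_prod_restrict_Ioc (by fun_prop) _ _ _ _

lemma contDiff_squareMGF {n : WithTop ℕ∞} : ContDiff ℝ n squareMGF :=
  contDiff_mgf_of_integrableExpSet_eq_univ integrableExpSet_neg_mul_squareMeasure

lemma iteratedDeriv_squareMGF (n : ℕ) (x : ℝ) :
    iteratedDeriv n squareMGF x =
      ∫ p, (-(p.1 * p.2)) ^ n * exp (x * -(p.1 * p.2)) ∂squareMeasure :=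
  iteratedDeriv_mgf (by simp [integrableExpSet_neg_mul_squareMeasure]) n

lemma squareMGF_eq_intervalIntegral (x : ℝ) :
    squareMGF x = ∫ u in (-1 : ℝ)..1, ∫ v in (-1 : ℝ)..1, exp (-x * (u * v)) := by
  rw [squareMGF, mgf,
    integral_prod _ (Continuous.integrable_prod_restrict_Ioc (by fun_prop) _ _ _ _),
    integral_of_le (by norm_num)]
  simp only [integral_of_le (show (-1 : ℝ) ≤ 1 by norm_num), neg_mul, mul_neg]

lemma quadruple_integral_eq_squareMGF_mul_self (x : ℝ) :
    ∫ w₁ in (-1 : ℝ)..1, ∫ w₂ in (-1 : ℝ)..1, ∫ w₃ in (-1 : ℝ)..1, ∫ w₄ in (-1 : ℝ)..1,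
      exp (-x * (w₁ * w₂ + w₃ * w₄)) = squareMGF x * squareMGF x := by
  simp only [mul_add, exp_add, intervalIntegral.integral_const_mul,
    intervalIntegral.integral_mul_const, squareMGF_eq_intervalIntegral]

-- The creative-telescoping certificate for the third-order equation satisfied by `squareMGF`.
noncomputable def boundaryTerm (x u v : ℝ) : ℝ :=
  (u ^ 2 - 1) * (x * u * (1 + v ^ 2) / 2 - v) * exp (x * -(u * v))

noncomputable def boundaryTermDerivFst (x u v : ℝ) : ℝ :=
  (2 * u * (x * u * (1 + v ^ 2) / 2 - v) + (u ^ 2 - 1) * (x * (1 + v ^ 2) / 2)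
    - x * v * ((u ^ 2 - 1) * (x * u * (1 + v ^ 2) / 2 - v))) * exp (x * -(u * v))

lemma continuous_boundaryTermDerivFst (x : ℝ) :
    Continuous fun p : ℝ × ℝ ↦ boundaryTermDerivFst x p.1 p.2 := by
  unfold boundaryTermDerivFst
  fun_prop

lemma hasDerivAt_boundaryTerm (x u v : ℝ) :
    HasDerivAt (boundaryTerm x · v) (boundaryTermDerivFst x u v) u := by
  have hpoly := ((hasDerivAt_pow 2 u).sub_const 1).fun_mul
    ((((hasDerivAt_id' u).const_mul x).mul_const (1 + v ^ 2)).div_const 2 |>.sub_const v)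
  have hexp := (((hasDerivAt_id' u).mul_const v).fun_neg.const_mul x).exp
  exact (hpoly.fun_mul hexp).congr_deriv (by simp only [boundaryTermDerivFst]; ring)

lemma moments_combination_eq_boundaryTermDerivFst_add (x u v : ℝ) :
    x ^ 2 * ((-(u * v)) ^ 3 * exp (x * -(u * v)))
      + 5 * x * ((-(u * v)) ^ 2 * exp (x * -(u * v)))
      + (4 - x ^ 2) * ((-(u * v)) ^ 1 * exp (x * -(u * v)))
      - x * ((-(u * v)) ^ 0 * exp (x * -(u * v))) =
    boundaryTermDerivFst x u v + boundaryTermDerivFst x v u := by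
  simp only [boundaryTermDerivFst, mul_comm v u]
  ring

lemma squareMGF_ode (x : ℝ) :
    x ^ 2 * iteratedDeriv 3 squareMGF x + 5 * x * iteratedDeriv 2 squareMGF x
      + (4 - x ^ 2) * iteratedDeriv 1 squareMGF x - x * iteratedDeriv 0 squareMGF x = 0 := by
  have hmoment (n : ℕ) (c : ℝ) : Integrable
      (fun p : ℝ × ℝ ↦ c * ((-(p.1 * p.2)) ^ n * exp (x * -(p.1 * p.2)))) squareMeasure :=
    Continuous.integrable_prod_restrict_Ioc (by fun_prop) _ _ _ _
  have hboundary : ∫ p, boundaryTermDerivFst x p.1 p.2 ∂squareMeasure = 0 :=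
    integral_prod_eq_zero_of_hasDerivAt_fst (by norm_num)
      (fun v u _ ↦ hasDerivAt_boundaryTerm x u v)
      (fun v ↦ ((continuous_boundaryTermDerivFst x).comp
        (by fun_prop : Continuous fun u : ℝ ↦ (u, v))).intervalIntegrable _ _)
      (by simp [boundaryTerm]) (by simp [boundaryTerm])
  have hboundary_swap : ∫ p, boundaryTermDerivFst x p.2 p.1 ∂squareMeasure = 0 :=
    (integral_prod_swap (fun p : ℝ × ℝ ↦ boundaryTermDerivFst x p.1 p.2)).trans hboundary
  have hcont_swap : Continuous fun p : ℝ × ℝ ↦ boundaryTermDerivFst x p.2 p.1 :=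
    (continuous_boundaryTermDerivFst x).comp continuous_swap
  simp only [iteratedDeriv_squareMGF, ← MeasureTheory.integral_const_mul]
  rw [← integral_add (hmoment 3 _) (hmoment 2 _),
    ← integral_add ((hmoment 3 _).fun_add (hmoment 2 _)) (hmoment 1 _),
    ← integral_sub (((hmoment 3 _).fun_add (hmoment 2 _)).fun_add (hmoment 1 _)) (hmoment 0 _)]
  simp only [moments_combination_eq_boundaryTermDerivFst_add]
  rw [integral_add ((continuous_boundaryTermDerivFst x).integrable_prod_restrict_Ioc _ _ _ _)
    (hcont_swap.integrable_prod_restrict_Ioc _ _ _ _),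
    hboundary, hboundary_swap, add_zero]

/-- The quadruple integral `f(x) = ∫∫∫∫ exp(-x(w₁w₂ + w₃w₄))` over `[-1,1]⁴` is six times
differentiable on `ℝ` and satisfies the homogeneous sixth-order linear differential equation
produced by cmAZDirectIntegrate. -/
theorem quadruple_integral_sixth_order_ODE
    (f : ℝ → ℝ)
    (hf : ∀ x : ℝ, f x =
      ∫ w₁ in (-1 : ℝ)..1, ∫ w₂ in (-1 : ℝ)..1, ∫ w₃ in (-1 : ℝ)..1, ∫ w₄ in (-1 : ℝ)..1,
        Real.exp (-x * (w₁ * w₂ + w₃ * w₄))) :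
    (∀ i : ℕ, i < 6 → Differentiable ℝ (deriv^[i] f)) ∧
    ∀ x : ℝ,
      0 = 32 * (4 * x - 16 * x ^ 3 + 9 * x ^ 5) * f x
        - 4 * (27 - 148 * x ^ 2 + 598 * x ^ 4 - 63 * x ^ 6) * deriv f x
        - 4 * (117 * x - 568 * x ^ 3 + 556 * x ^ 5 - 9 * x ^ 7) * deriv^[2] f x
        - (478 * x ^ 2 - 2919 * x ^ 4 + 603 * x ^ 6) * deriv^[3] f x
        - 5 * (34 * x ^ 3 - 247 * x ^ 5 + 9 * x ^ 7) * deriv^[4] f x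
        - (23 * x ^ 4 - 189 * x ^ 6) * deriv^[5] f x
        - (x ^ 5 - 9 * x ^ 7) * deriv^[6] f x := by
  have hfH : f = squareMGF * squareMGF :=
    funext fun x ↦ (hf x).trans (quadruple_integral_eq_squareMGF_mul_self x)
  have hH : ContDiff ℝ ∞ squareMGF := contDiff_squareMGF
  refine ⟨fun i _ ↦ iteratedDeriv_eq_iterate (f := f) ▸ hfH ▸
    (hH.mul hH).differentiable_iteratedDeriv i (by exact_mod_cast WithTop.coe_lt_top _), fun x ↦ ?_⟩
  have hleibniz (n : ℕ) : deriv^[n] f x = ∑ i ∈ Finset.range (n + 1),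
      n.choose i * iteratedDeriv i squareMGF x * iteratedDeriv (n - i) squareMGF x := by
    rw [← iteratedDeriv_eq_iterate, hfH]
    exact iteratedDeriv_mul contDiff_squareMGF.contDiffAt contDiff_squareMGF.contDiffAt
  have hode (k : ℕ) := iteratedDeriv_ode hH squareMGF_ode k x
  have ode₀ := hode 0
  have ode₁ := hode 1
  have ode₂ := hode 2
  have ode₃ := hode 3
  norm_num at ode₀ ode₁ ode₂ ode₃
  rw [show f x = deriv^[0] f x from rfl, show deriv f x = deriv^[1] f x from rfl]
  simp only [hleibniz, Finset.sum_range_succ, Finset.sum_range_zero]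
  norm_num [Nat.choose]
  set H₀ := squareMGF x
  set H₁ := deriv squareMGF x
  set H₂ := iteratedDeriv 2 squareMGF x
  set H₃ := iteratedDeriv 3 squareMGF x
  -- cofactors from dividing the sixth-order operator applied to `H²` by the four relations
  linear_combination
    (54 * H₀ + 234 * x * H₁ - 114 * x ^ 2 * H₀ + 150 * x ^ 2 * H₂ + 20 * x ^ 3 * H₃
      - 974 * x ^ 3 * H₁ - 990 * x ^ 4 * H₂ + 216 * x ^ 4 * H₀ - 180 * x ^ 5 * H₃
      + 72 * x ^ 5 * H₁) * ode₀
    + (74 * x * H₀ + 122 * x ^ 2 * H₁ - 398 * x ^ 3 * H₀ + 30 * x ^ 3 * H₂ - 918 * x ^ 4 * H₁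
      - 270 * x ^ 5 * H₂ + 72 * x ^ 5 * H₀) * ode₁
    + (24 * x ^ 2 * H₀ + 12 * x ^ 3 * H₁ - 180 * x ^ 4 * H₀ - 108 * x ^ 5 * H₁) * ode₂
    + (2 * x ^ 3 * H₀ - 18 * x ^ 5 * H₀) * ode₃
end

section
/- For every real ε > −2, the function w ↦ I(ε,w) is differentiable at w = 0 and its derivative there equals −4·(28 + ε·(12 + ε)) / ( 3·(2+ε)·(4+ε)²·(6+ε)² ). -/
/-!
For `w ≤ 1` the factor `1 - w` splits off the integrand as `(1 - w) ^ (a + 1)` with `a = ε / 2`,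
and the `z`-integral is `1 / 6`, so `I(ε, w) = (1 - w) ^ (a + 1) * B(w) / 6` where
`B(w) = expBetaIntegral a w = ∬ exp (x y w) x ^ a (1 - x) (1 - y) ^ a y` over the unit square.
Since `|x y| ≤ 1`, `B` can be differentiated under the integral sign, and both `B(0)` and `B'(0)`
factor into the Beta integrals `∫₀¹ x ^ a (1 - x) = 1 / ((a + 1) (a + 2))` and
`∫₀¹ x ^ a (1 - x) ^ 2 = 2 / ((a + 1) (a + 2) (a + 3))`; the product rule then gives the value.
-/

open MeasureTheory intervalIntegral Set Filter Topology

theorem integral_rpow_zero_one {b : ℝ} (hb : -1 < b) : ∫ x in (0:ℝ)..1, x ^ b = 1 / (b + 1) := by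
  rw [integral_rpow (Or.inl hb), Real.one_rpow, Real.zero_rpow (by linarith), sub_zero]

theorem integral_comp_one_sub_zero_one (f : ℝ → ℝ) :
    ∫ x in (0:ℝ)..1, f (1 - x) = ∫ x in (0:ℝ)..1, f x := by
  simp [integral_comp_sub_left]

section Beta

variable {a : ℝ}

theorem integral_rpow_mul_one_sub (ha : -1 < a) :
    ∫ x in (0:ℝ)..1, x ^ a * (1 - x) = 1 / ((a + 1) * (a + 2)) := by
  have hsplit : EqOn (fun x : ℝ => x ^ a * (1 - x)) (fun x => x ^ a - x ^ (a + 1)) (uIcc 0 1) :=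
    fun x hx => by
      rw [uIcc_of_le zero_le_one] at hx
      simp only [Real.rpow_add_one' hx.1 (by linarith : a + 1 ≠ 0)]
      ring
  rw [integral_congr hsplit, integral_sub (intervalIntegrable_rpow' ha)
    (intervalIntegrable_rpow' (by linarith)), integral_rpow_zero_one ha,
    integral_rpow_zero_one (by linarith), show a + 1 + 1 = a + 2 by ring]
  have : a + 1 ≠ 0 := by linarith
  have : a + 2 ≠ 0 := by linarith
  field_simp
  ring

theorem integral_rpow_mul_one_sub_sq (ha : -1 < a) :
    ∫ x in (0:ℝ)..1, x ^ a * (1 - x) ^ 2 = 2 / ((a + 1) * (a + 2) * (a + 3)) := by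
  have hsplit : EqOn (fun x : ℝ => x ^ a * (1 - x) ^ 2)
      (fun x => x ^ a - 2 * x ^ (a + 1) + x ^ (a + 1 + 1)) (uIcc 0 1) :=
    fun x hx => by
      rw [uIcc_of_le zero_le_one] at hx
      simp only [Real.rpow_add_one' hx.1 (by linarith : a + 1 ≠ 0),
        Real.rpow_add_one' hx.1 (by linarith : a + 1 + 1 ≠ 0)]
      ring
  have i0 : IntervalIntegrable (fun x : ℝ => x ^ a) volume 0 1 := intervalIntegrable_rpow' ha
  have i1 : IntervalIntegrable (fun x : ℝ => x ^ (a + 1)) volume 0 1 :=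
    intervalIntegrable_rpow' (by linarith)
  have i2 : IntervalIntegrable (fun x : ℝ => x ^ (a + 1 + 1)) volume 0 1 :=
    intervalIntegrable_rpow' (by linarith)
  rw [integral_congr hsplit, integral_add (i0.sub (i1.const_mul 2)) i2,
    integral_sub i0 (i1.const_mul 2), intervalIntegral.integral_const_mul,
    integral_rpow_zero_one ha, integral_rpow_zero_one (by linarith),
    integral_rpow_zero_one (by linarith),
    show a + 1 + 1 = a + 2 by ring, show a + 2 + 1 = a + 3 by ring]
  have : a + 1 ≠ 0 := by linarith
  have : a + 2 ≠ 0 := by linarith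
  have : a + 3 ≠ 0 := by linarith
  field_simp
  ring

end Beta

section ExpMul

variable {α : Type*} [MeasurableSpace α] {μ : Measure α} {u φ : α → ℝ} {C : ℝ}

theorem exp_mul_le_of_abs_le {t w C : ℝ} (ht : |t| ≤ C) : Real.exp (t * w) ≤ Real.exp (C * |w|) :=
  Real.exp_le_exp.2 <| (le_abs_self _).trans <| by
    rw [abs_mul]; exact mul_le_mul_of_nonneg_right ht (abs_nonneg w)

theorem integrable_exp_mul_of_abs_le (hu : AEStronglyMeasurable u μ) (huC : ∀ᵐ p ∂μ, |u p| ≤ C)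
    (hφ : Integrable φ μ) (w : ℝ) : Integrable (fun p => Real.exp (u p * w) * φ p) μ :=
  hφ.bdd_mul (Real.continuous_exp.comp_aestronglyMeasurable (hu.mul_const w)) <| by
    filter_upwards [huC] with p hp
    rw [Real.norm_eq_abs, abs_of_pos (Real.exp_pos _)]
    exact exp_mul_le_of_abs_le hp

theorem hasDerivAt_integral_exp_mul (hu : AEStronglyMeasurable u μ) (huC : ∀ᵐ p ∂μ, |u p| ≤ C)
    (hφ : Integrable φ μ) (w₀ : ℝ) :
    HasDerivAt (fun w => ∫ p, Real.exp (u p * w) * φ p ∂μ)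
      (∫ p, Real.exp (u p * w₀) * u p * φ p ∂μ) w₀ := by
  have hbound : ∀ᵐ p ∂μ, ∀ w ∈ Metric.ball w₀ 1,
      ‖Real.exp (u p * w) * u p * φ p‖ ≤ Real.exp (C * (|w₀| + 1)) * C * |φ p| := by
    filter_upwards [huC] with p hp w hw
    have hw' : |w| ≤ |w₀| + 1 := by
      have := abs_sub_abs_le_abs_sub w w₀
      rw [Metric.mem_ball, Real.dist_eq] at hw
      linarith
    have hC : 0 ≤ C := (abs_nonneg _).trans hp
    rw [norm_mul, norm_mul, Real.norm_eq_abs, Real.norm_eq_abs, Real.norm_eq_abs,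
      abs_of_pos (Real.exp_pos _)]
    have hexp : Real.exp (u p * w) ≤ Real.exp (C * (|w₀| + 1)) :=
      (exp_mul_le_of_abs_le hp).trans (Real.exp_le_exp.2 (by gcongr))
    gcongr
  refine (hasDerivAt_integral_of_dominated_loc_of_deriv_le (Metric.ball_mem_nhds w₀ one_pos)
    (Eventually.of_forall fun w => (integrable_exp_mul_of_abs_le hu huC hφ w).1)
    (integrable_exp_mul_of_abs_le hu huC hφ w₀)
    (((Real.continuous_exp.comp_aestronglyMeasurable (hu.mul_const w₀)).mul hu).mul hφ.1)
    hbound (hφ.abs.const_mul _) ?_).2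
  refine Eventually.of_forall fun p w _ => ?_
  simpa using (((hasDerivAt_id w).const_mul (u p)).exp).mul_const (φ p)

end ExpMul

/-- Lebesgue measure on `(0, 1]²`, as a product measure so that Fubini applies directly. -/
noncomputable abbrev unitSquare : Measure (ℝ × ℝ) :=
  (volume.restrict (Ioc 0 1)).prod (volume.restrict (Ioc 0 1))

theorem ae_abs_fst_mul_snd_le_one : ∀ᵐ p ∂unitSquare, |p.1 * p.2| ≤ 1 := by
  rw [unitSquare, Measure.prod_restrict]
  filter_upwards [ae_restrict_mem (measurableSet_Ioc.prod measurableSet_Ioc)]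
    with p ⟨⟨hx₀, hx₁⟩, ⟨hy₀, hy₁⟩⟩
  rw [abs_of_pos (mul_pos hx₀ hy₀)]
  exact mul_le_one₀ hx₁ hy₀.le hy₁

section ExpBetaIntegral

variable {a : ℝ}

noncomputable def expBetaIntegral (a w : ℝ) : ℝ :=
  ∫ p, Real.exp (p.1 * p.2 * w) * (p.1 ^ a * (1 - p.1) * ((1 - p.2) ^ a * p.2)) ∂unitSquare

theorem integrable_betaWeight (ha : -1 < a) :
    Integrable (fun p : ℝ × ℝ => p.1 ^ a * (1 - p.1) * ((1 - p.2) ^ a * p.2)) unitSquare := by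
  have hx : IntervalIntegrable (fun x : ℝ => x ^ a * (1 - x)) volume 0 1 :=
    (intervalIntegrable_rpow' ha).mul_continuousOn (by fun_prop)
  have hy : IntervalIntegrable (fun y : ℝ => (1 - y) ^ a * y) volume 0 1 := by
    simpa using (hx.comp_sub_left 1).symm
  rw [intervalIntegrable_iff_integrableOn_Ioc_of_le zero_le_one] at hx hy
  exact hx.mul_prod hy

theorem integral_integral_eq_expBetaIntegral (ha : -1 < a) (w : ℝ) :
    ∫ x in (0:ℝ)..1, ∫ y in (0:ℝ)..1,
      Real.exp (x * y * w) * (x ^ a * (1 - x) * ((1 - y) ^ a * y)) = expBetaIntegral a w := by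
  rw [expBetaIntegral, integral_prod _ (integrable_exp_mul_of_abs_le (by fun_prop)
    ae_abs_fst_mul_snd_le_one (integrable_betaWeight ha) w)]
  simp only [integral_of_le zero_le_one]

theorem expBetaIntegral_zero (ha : -1 < a) :
    expBetaIntegral a 0 = (1 / ((a + 1) * (a + 2))) ^ 2 := by
  simp only [expBetaIntegral, mul_zero, Real.exp_zero, one_mul]
  rw [integral_prod_mul (fun x : ℝ => x ^ a * (1 - x)) (fun y : ℝ => (1 - y) ^ a * y),
    ← integral_of_le zero_le_one, ← integral_of_le zero_le_one, sq,
    ← integral_rpow_mul_one_sub ha]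
  congr 1
  simpa using integral_comp_one_sub_zero_one (fun x : ℝ => x ^ a * (1 - x))

theorem hasDerivAt_expBetaIntegral (ha : -1 < a) :
    HasDerivAt (expBetaIntegral a)
      (1 / ((a + 2) * (a + 3)) * (2 / ((a + 1) * (a + 2) * (a + 3)))) 0 := by
  refine (hasDerivAt_integral_exp_mul (by fun_prop) ae_abs_fst_mul_snd_le_one
    (integrable_betaWeight ha) 0).congr_deriv ?_
  have hx : ∫ x in (0:ℝ)..1, x * (x ^ a * (1 - x)) = 1 / ((a + 2) * (a + 3)) := by
    rw [show (a + 2) * (a + 3) = (a + 1 + 1) * (a + 1 + 2) by ring,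
      ← integral_rpow_mul_one_sub (by linarith)]
    refine integral_congr fun x hx => ?_
    rw [uIcc_of_le zero_le_one] at hx
    simp only [Real.rpow_add_one' hx.1 (by linarith : a + 1 ≠ 0)]
    ring
  have hy : ∫ y in (0:ℝ)..1, y * ((1 - y) ^ a * y) = 2 / ((a + 1) * (a + 2) * (a + 3)) := by
    rw [← integral_rpow_mul_one_sub_sq ha, ← integral_comp_one_sub_zero_one]
    simp only [sub_sub_cancel]
    exact integral_congr fun y _ => by ring
  rw [← hx, ← hy, integral_of_le zero_le_one, integral_of_le zero_le_one, ← integral_prod_mul]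
  exact integral_congr_ae (Eventually.of_forall fun p => by
    simp only [mul_zero, Real.exp_zero, one_mul]; ring)

end ExpBetaIntegral

theorem integral_mul_one_sub_zero_one : ∫ z in (0:ℝ)..1, z * (1 - z) = 1 / 6 := by
  convert integral_rpow_mul_one_sub (a := 1) (by norm_num) using 1 <;> norm_num

theorem integrand_eq_factor {a w x y z : ℝ} (ha : -1 < a) (hw : w ≤ 1) (hx : 0 ≤ x) (hy : y ≤ 1) :
    Real.exp (x * y * w) * ((1 - w) * x * (1 - y)) ^ a * ((1 - w) * y * (1 - x) * z * (1 - z)) =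
      (1 - w) ^ (a + 1) * (Real.exp (x * y * w) * (x ^ a * (1 - x) * ((1 - y) ^ a * y))) *
        (z * (1 - z)) := by
  rw [Real.mul_rpow (mul_nonneg (sub_nonneg.2 hw) hx) (sub_nonneg.2 hy),
    Real.mul_rpow (sub_nonneg.2 hw) hx, Real.rpow_add_one' (sub_nonneg.2 hw) (by linarith)]
  ring

theorem integral_triple_eq_expBetaIntegral {a w : ℝ} (ha : -1 < a) (hw : w ≤ 1) :
    ∫ x in (0:ℝ)..1, ∫ y in (0:ℝ)..1, ∫ z in (0:ℝ)..1,
        Real.exp (x * y * w) * ((1 - w) * x * (1 - y)) ^ a * ((1 - w) * y * (1 - x) * z * (1 - z)) =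
      (1 - w) ^ (a + 1) * expBetaIntegral a w * (1 / 6) := by
  calc _ = ∫ x in (0:ℝ)..1, ∫ y in (0:ℝ)..1, (1 - w) ^ (a + 1) *
          (Real.exp (x * y * w) * (x ^ a * (1 - x) * ((1 - y) ^ a * y))) * (1 / 6) :=
        integral_congr fun x hx => integral_congr fun y hy => by
          rw [uIcc_of_le zero_le_one] at hx hy
          simp only [integrand_eq_factor ha hw hx.1 hy.2, intervalIntegral.integral_const_mul,
            integral_mul_one_sub_zero_one]
    _ = _ := by
      simp only [intervalIntegral.integral_mul_const, intervalIntegral.integral_const_mul,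
        integral_integral_eq_expBetaIntegral ha]

/-- The derivative at `w = 0` of `w ↦ I(ε,w)`: the coefficient of `w¹` in the power series
expansion at `w = 0` used as initial condition by cmAZExpandedDirectIntegrate. -/
theorem triple_integral_derivative_at_zero
    (I : ℝ → ℝ → ℝ)
    (hI : ∀ (ε w : ℝ), I ε w =
      ∫ x in (0 : ℝ)..1, ∫ y in (0 : ℝ)..1, ∫ z in (0 : ℝ)..1,
        Real.exp (x * y * w) * ((1 - w) * x * (1 - y)) ^ (ε / 2) *
          ((1 - w) * y * (1 - x) * z * (1 - z))) :
    ∀ ε : ℝ, -2 < ε →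
      HasDerivAt (fun w : ℝ => I ε w)
        (-4 * (28 + ε * (12 + ε)) / (3 * (2 + ε) * (4 + ε) ^ 2 * (6 + ε) ^ 2)) 0 := by
  intro ε hε
  have ha : -1 < ε / 2 := by linarith
  have hfactor : (fun w => I ε w) =ᶠ[𝓝 0]
      fun w => (1 - w) ^ (ε / 2 + 1) * expBetaIntegral (ε / 2) w * (1 / 6) := by
    filter_upwards [Iic_mem_nhds one_pos] with w hw
    rw [hI, integral_triple_eq_expBetaIntegral ha hw]
  have hpow : HasDerivAt (fun w : ℝ => (1 - w) ^ (ε / 2 + 1)) (-(ε / 2 + 1)) 0 := by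
    simpa using ((hasDerivAt_id (0:ℝ)).const_sub 1).rpow_const (p := ε / 2 + 1)
      (Or.inl (by norm_num))
  refine (((hpow.mul (hasDerivAt_expBetaIntegral ha)).mul_const (1 / 6)).congr_of_eventuallyEq
    hfactor).congr_deriv ?_
  have : 2 + ε ≠ 0 := by linarith
  have : 4 + ε ≠ 0 := by linarith
  have : 6 + ε ≠ 0 := by linarith
  rw [expBetaIntegral_zero ha, sub_zero, Real.one_rpow, show ε / 2 + 1 = (2 + ε) / 2 by ring,
    show ε / 2 + 2 = (4 + ε) / 2 by ring, show ε / 2 + 3 = (6 + ε) / 2 by ring]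
  field_simp
  ring
end

section
/- For every w ∈ (0,1): ∫_0^1 ∫_0^1 ∫_0^1 e^{x y w} · (1−w)·y·(1−x)·z·(1−z) dz dy dx = 1/6 − 1/(6w) + ( 1/(6w) − 1/(6w²) ) · ∫_0^w (1 − e^{τ})/τ dτ. -/
open MeasureTheory intervalIntegral

/-!
After the `z`-integral (which gives `1/6`) and a swap of the `x`- and `y`-integrals, the
`x`-integral is elementary: `b * ∫₀¹ e^{x b} (1 - x) dx = (e^b - 1)/b - 1` for `b = y w`. The
difference quotient `(e^b - 1)/b` is `dslope exp 0 b`, continuous in `b`, so the substitution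
`τ = y w` is legitimate, and `(1 - e^τ)/τ = -slope exp 0 τ` agrees with `-dslope exp 0 τ` off the
null set `{0}`.
-/

theorem intervalIntegral.integral_integral_swap_of_continuous {E : Type*} [NormedAddCommGroup E]
    [NormedSpace ℝ E] {f : ℝ → ℝ → E} (hf : Continuous (Function.uncurry f)) (a b c d : ℝ) :
    ∫ x in a..b, ∫ y in c..d, f x y = ∫ y in c..d, ∫ x in a..b, f x y := by
  simp only [intervalIntegral_eq_integral_uIoc, MeasureTheory.integral_smul]
  rw [smul_comm, integral_integral_swap]
  rw [Measure.prod_restrict, ← Measure.volume_eq_prod]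
  exact (hf.continuousOn.integrableOn_compact (isCompact_uIcc.prod isCompact_uIcc)).mono_set
    (Set.prod_mono Set.uIoc_subset_uIcc Set.uIoc_subset_uIcc)

theorem integral_mul_one_sub_self : ∫ z in (0 : ℝ)..1, z * (1 - z) = 1 / 6 := by
  simp_rw [mul_one_sub, ← pow_two]
  rw [integral_sub intervalIntegrable_id (intervalIntegrable_pow 2), integral_id, integral_pow]
  norm_num

theorem integral_slope_eq_integral_dslope {E : Type*} [NormedAddCommGroup E] [NormedSpace ℝ E]
    (f : ℝ → E) (a c d : ℝ) : ∫ x in c..d, slope f a x = ∫ x in c..d, dslope f a x := by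
  refine integral_congr_ae ?_
  filter_upwards [volume.ae_ne a] with x hx _
  exact (dslope_of_ne f hx).symm

theorem continuous_dslope_exp_zero : Continuous (dslope Real.exp 0) :=
  continuousOn_univ.mp <| (continuousOn_dslope Filter.univ_mem).mpr
    ⟨Real.continuous_exp.continuousOn, Real.differentiableAt_exp⟩

theorem mul_integral_exp_mul_one_sub (b : ℝ) :
    b * ∫ x in (0 : ℝ)..1, Real.exp (x * b) * (1 - x) = dslope Real.exp 0 b - 1 := by
  rcases eq_or_ne b 0 with rfl | hb
  · simp [dslope_same]
  have hderiv : ∀ x ∈ Set.uIcc (0 : ℝ) 1,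
      HasDerivAt (fun x => Real.exp (x * b) * ((1 - x) / b + 1 / b ^ 2))
        (Real.exp (x * b) * (1 - x)) x := by
    intro x _
    have := (((hasDerivAt_id x).mul_const b).exp).mul
      (((hasDerivAt_id x).const_sub 1).div_const b |>.add_const (1 / b ^ 2))
    refine this.congr_deriv ?_
    simp only [id]
    field_simp
    ring
  rw [integral_eq_sub_of_hasDerivAt hderiv (Continuous.intervalIntegrable (by fun_prop) _ _),
    dslope_of_ne _ hb, slope_def_field]
  field_simp
  simp only [sub_self, mul_zero, zero_add, mul_one, Real.exp_zero, sub_zero, one_mul]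
  ring

theorem integral_mul_integral_exp_mul_one_sub {w : ℝ} (hw : w ≠ 0) :
    ∫ y in (0 : ℝ)..1, y * w * ∫ x in (0 : ℝ)..1, Real.exp (x * (y * w)) * (1 - x)
      = w⁻¹ * (∫ τ in (0 : ℝ)..w, dslope Real.exp 0 τ) - 1 := by
  simp_rw [mul_integral_exp_mul_one_sub]
  rw [intervalIntegral.integral_sub (f := fun y => dslope Real.exp 0 (y * w))
    ((continuous_dslope_exp_zero.comp (continuous_mul_const w)).intervalIntegrable _ _)
    intervalIntegrable_const, intervalIntegral.integral_comp_mul_right _ hw]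
  simp

theorem integral_one_sub_exp_div (a b : ℝ) :
    ∫ τ in a..b, (1 - Real.exp τ) / τ = -∫ τ in a..b, dslope Real.exp 0 τ := by
  rw [← integral_slope_eq_integral_dslope, ← intervalIntegral.integral_neg]
  simp only [slope_def_field, Real.exp_zero, sub_zero]
  congr with τ
  ring

/-- The `ε⁰`-coefficient `I(0,w)` of the triple integral, in terms of the iterated integral
`G((1-e^τ)/τ; w)`, as computed by cmAZExpandedDirectIntegrate. -/
theorem triple_integral_epsilon_zero_coefficient :
    ∀ w ∈ Set.Ioo (0 : ℝ) 1,
      (∫ x in (0 : ℝ)..1, ∫ y in (0 : ℝ)..1, ∫ z in (0 : ℝ)..1,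
          Real.exp (x * y * w) * ((1 - w) * y * (1 - x) * z * (1 - z)))
        = 1 / 6 - 1 / (6 * w)
          + (1 / (6 * w) - 1 / (6 * w ^ 2)) * ∫ τ in (0 : ℝ)..w, (1 - Real.exp τ) / τ := by
  rintro w ⟨hw0, -⟩
  set c := (1 - w) / (6 * w) with hc
  have hz (x y : ℝ) : ∫ z in (0 : ℝ)..1,
      Real.exp (x * y * w) * ((1 - w) * y * (1 - x) * z * (1 - z))
        = c * (y * w * (Real.exp (x * (y * w)) * (1 - x))) := by
    have (z : ℝ) : Real.exp (x * y * w) * ((1 - w) * y * (1 - x) * z * (1 - z))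
        = ((1 - w) * y * (1 - x) * Real.exp (x * (y * w))) * (z * (1 - z)) := by
      rw [mul_assoc x y w]; ring
    simp_rw [this]
    rw [intervalIntegral.integral_const_mul, integral_mul_one_sub_self, hc]
    field_simp
  calc _ = ∫ x in (0 : ℝ)..1, ∫ y in (0 : ℝ)..1,
          c * (y * w * (Real.exp (x * (y * w)) * (1 - x))) := by simp_rw [hz]
    _ = ∫ y in (0 : ℝ)..1, ∫ x in (0 : ℝ)..1,
          c * (y * w * (Real.exp (x * (y * w)) * (1 - x))) :=
        integral_integral_swap_of_continuous (by fun_prop) _ _ _ _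
    _ = c * ∫ y in (0 : ℝ)..1,
          y * w * ∫ x in (0 : ℝ)..1, Real.exp (x * (y * w)) * (1 - x) := by
        simp_rw [intervalIntegral.integral_const_mul]
    _ = _ := by
        rw [integral_mul_integral_exp_mul_one_sub hw0.ne', integral_one_sub_exp_div, hc]
        field_simp
        ring
end
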